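/- Let Δ_γ be the star of a vertex γ of valence 3 whose three surrounding quadrilateral faces have their other edge-vertices of valence 4, with symmetric gluing data (so d_a = 2, a ≠ 0). Then dim G¹_d(Δ_γ, Φ) = (3/2)(d² − d − 2) for every d ≥ 4, and dim G¹_{(d,d)}(Δ_γ, Φ) = 3d² − 3 for every d ≥ 3. -/

import Mathlib

open MvPolynomial

/-- The variable `u_i` in `ℝ[u₁,v₁,u₂,v₂,u₃,v₃]` (three faces indexed by `ZMod 3`). -/
noncomputable def uv (i : ZMod 3) : MvPolynomial (ZMod 3 × Fin 2) ℝ :=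
  MvPolynomial.X (i, 0)

/-- The variable `v_i`. -/
noncomputable def vv (i : ZMod 3) : MvPolynomial (ZMod 3 × Fin 2) ℝ :=
  MvPolynomial.X (i, 1)

/-- The symmetric gluing polynomial for center valence 3 and outer valences 4:
`a(u) = 2cos(2π/3)(1−u)² − 2cos(2π/4)u² = −(1−u)²`, of degree `d_a = 2`. -/
noncomputable def glue19 : Polynomial ℝ := -(1 - Polynomial.X) ^ 2

/-- The transition ideal of the edge `τ_i = σ_i ∩ σ_{i+1}`:
`⟨u_i + v_{i+1}, v_i − u_{i+1} − v_{i+1}·a(u_{i+1}), u_i², v_{i+1}²⟩`. -/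
noncomputable def Iedge19 (i : ZMod 3) : Ideal (MvPolynomial (ZMod 3 × Fin 2) ℝ) :=
  Ideal.span
    {uv i + vv (i + 1),
     vv i - uv (i + 1) - vv (i + 1) * Polynomial.aeval (uv (i + 1)) glue19,
     (uv i) ^ 2, (vv (i + 1)) ^ 2}

/-- The linear map `(f_t)_t ↦ f_i(u_i,v_i) − f_{i+1}(u_{i+1},v_{i+1})`. -/
noncomputable def edgeDiff19 (i : ZMod 3) :
    (ZMod 3 → MvPolynomial (Fin 2) ℝ) →ₗ[ℝ] MvPolynomial (ZMod 3 × Fin 2) ℝ :=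
  (MvPolynomial.rename (fun j : Fin 2 => (i, j))).toLinearMap ∘ₗ LinearMap.proj i -
    (MvPolynomial.rename (fun j : Fin 2 => (i + 1, j))).toLinearMap ∘ₗ LinearMap.proj (i + 1)

/-- `G¹`-splines of total degree ≤ d on the star of the valence-3 vertex. -/
noncomputable def G19Tot (d : ℕ) : Submodule ℝ (ZMod 3 → MvPolynomial (Fin 2) ℝ) :=
  (Submodule.pi Set.univ fun _ => MvPolynomial.restrictTotalDegree (Fin 2) ℝ d) ⊓
    ⨅ i : ZMod 3, Submodule.comap (edgeDiff19 i) (Submodule.restrictScalars ℝ (Iedge19 i))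

/-- `G¹`-splines of bidegree ≤ (d,d) on the star of the valence-3 vertex. -/
noncomputable def G19Bi (d : ℕ) : Submodule ℝ (ZMod 3 → MvPolynomial (Fin 2) ℝ) :=
  (Submodule.pi Set.univ fun _ => MvPolynomial.restrictDegree (Fin 2) ℝ d) ⊓
    ⨅ i : ZMod 3, Submodule.comap (edgeDiff19 i) (Submodule.restrictScalars ℝ (Iedge19 i))

namespace Aux19

open MvPolynomial Polynomial TrivSqZeroExt DualNumber

noncomputable section

abbrev M2 : Type := MvPolynomial (Fin 2) ℝ
abbrev PR : Type := Polynomial ℝ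
abbrev DA : Type := DualNumber PR

/-- the exponent finsupp (a, b) -/
def fs2 (a b : ℕ) : Fin 2 →₀ ℕ := Finsupp.single 0 a + Finsupp.single 1 b

@[simp] lemma fs2_apply0 (a b : ℕ) : fs2 a b 0 = a := by
  simp [fs2, Finsupp.single_apply]

@[simp] lemma fs2_apply1 (a b : ℕ) : fs2 a b 1 = b := by
  simp [fs2, Finsupp.single_apply]

lemma eq_fs2 (m : Fin 2 →₀ ℕ) : m = fs2 (m 0) (m 1) := by
  ext i; fin_cases i <;> simp

lemma fs2_inj {a b c d : ℕ} : fs2 a b = fs2 c d ↔ a = c ∧ b = d := by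
  constructor
  · intro h
    exact ⟨by simpa using congrArg (fun m => m 0) h, by simpa using congrArg (fun m => m 1) h⟩
  · rintro ⟨rfl, rfl⟩; rfl

lemma monomial_fs2 (a b : ℕ) (r : ℝ) :
    (monomial (fs2 a b) r : M2) = MvPolynomial.C r * X 0 ^ a * X 1 ^ b := by
  calc (monomial (fs2 a b) r : M2)
      = monomial (Finsupp.single 0 a) r * monomial (Finsupp.single 1 b) 1 := by
        rw [monomial_mul, mul_one]; rfl
    _ = MvPolynomial.C r * X 0 ^ a * X 1 ^ b := by
        rw [MvPolynomial.C_mul_X_pow_eq_monomial, MvPolynomial.X_pow_eq_monomial]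

lemma fs2_sum (a b : ℕ) : ((fs2 a b).sum fun _ e => e) = a + b := by
  rw [eq_fs2 (fs2 a b), Finsupp.sum_fintype] <;> simp [Fin.sum_univ_two]

/-- `u ↦ ε`, `v ↦ X`; encodes the 1-jet along `u = 0`. -/
def Nmap : M2 →ₐ[ℝ] DA := MvPolynomial.aeval ![ε, inl Polynomial.X]

/-- `u ↦ X`, `v ↦ ε`; encodes the 1-jet along `v = 0`. -/
def Rmap : M2 →ₐ[ℝ] DA := MvPolynomial.aeval ![inl Polynomial.X, ε]

/-- the twisted jet map of the transition through an edge -/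
def Lmap : M2 →ₐ[ℝ] DA :=
  MvPolynomial.aeval ![-ε, inl Polynomial.X + inl glue19 * ε]

lemma inl_mul_eps (p : PR) : (inl p : DA) * ε = inr p := by
  rw [show (ε : DA) = inr (1 : PR) from rfl, inl_mul_inr, smul_eq_mul, mul_one]

lemma eps_pow_eq_zero {a : ℕ} (ha : 2 ≤ a) : (ε : DA) ^ a = 0 := by
  obtain ⟨c, rfl⟩ := Nat.exists_eq_add_of_le ha
  rw [pow_add, pow_two, eps_mul_eps, zero_mul]

lemma Nmap_C (r : ℝ) : Nmap (MvPolynomial.C r) = inl (Polynomial.C r) := by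
  rw [show (MvPolynomial.C r : M2) = algebraMap ℝ M2 r from rfl, AlgHom.commutes]
  rfl

lemma Rmap_C (r : ℝ) : Rmap (MvPolynomial.C r) = inl (Polynomial.C r) := by
  rw [show (MvPolynomial.C r : M2) = algebraMap ℝ M2 r from rfl, AlgHom.commutes]
  rfl

lemma Lmap_C (r : ℝ) : Lmap (MvPolynomial.C r) = inl (Polynomial.C r) := by
  rw [show (MvPolynomial.C r : M2) = algebraMap ℝ M2 r from rfl, AlgHom.commutes]
  rfl

lemma Nmap_monomial (a b : ℕ) (r : ℝ) :
    Nmap (monomial (fs2 a b) r) =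
      if a = 0 then inl (Polynomial.C r * Polynomial.X ^ b)
      else if a = 1 then inr (Polynomial.C r * Polynomial.X ^ b) else 0 := by
  rw [monomial_fs2, map_mul, map_mul, map_pow, map_pow,
    show Nmap (X 0) = ε from aeval_X _ 0, show Nmap (X 1) = inl Polynomial.X from aeval_X _ 1,
    Nmap_C, inl_pow]
  rcases Nat.lt_or_ge a 2 with h | h
  · interval_cases a
    · rw [pow_zero, mul_one, inl_mul_inl, if_pos rfl]
    · rw [pow_one, mul_right_comm, inl_mul_inl, inl_mul_eps, if_neg one_ne_zero, if_pos rfl]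
  · rw [eps_pow_eq_zero h]
    simp [show a ≠ 0 by omega, show a ≠ 1 by omega]

lemma Rmap_monomial (a b : ℕ) (r : ℝ) :
    Rmap (monomial (fs2 a b) r) =
      if b = 0 then inl (Polynomial.C r * Polynomial.X ^ a)
      else if b = 1 then inr (Polynomial.C r * Polynomial.X ^ a) else 0 := by
  rw [monomial_fs2, map_mul, map_mul, map_pow, map_pow,
    show Rmap (X 0) = inl Polynomial.X from aeval_X _ 0, show Rmap (X 1) = ε from aeval_X _ 1,
    Rmap_C, inl_pow]
  rcases Nat.lt_or_ge b 2 with h | h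
  · interval_cases b
    · rw [pow_zero, mul_one, inl_mul_inl, if_pos rfl]
    · rw [pow_one, inl_mul_inl, inl_mul_eps, if_neg one_ne_zero, if_pos rfl]
  · rw [eps_pow_eq_zero h]
    simp [show b ≠ 0 by omega, show b ≠ 1 by omega]

lemma pow_jet (b : ℕ) :
    (inl Polynomial.X + inl glue19 * ε : DA) ^ b =
      inl (Polynomial.X ^ b) + inr (glue19 * derivative (Polynomial.X ^ b)) := by
  induction b with
  | zero => simp
  | succ n ih =>
    rw [pow_succ, ih]
    refine TrivSqZeroExt.ext ?_ ?_ <;>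
      simp [fst_mul, DualNumber.snd_mul, pow_succ, derivative_mul] <;> ring

end

end Aux19

namespace Aux19
open MvPolynomial Polynomial TrivSqZeroExt DualNumber
noncomputable section

lemma eps_mul_inr (q : PR) : (ε : DA) * inr q = 0 := by
  rw [show (ε : DA) = inr (1 : PR) from rfl, inr_mul_inr]

lemma Lmap_monomial (a b : ℕ) (r : ℝ) :
    Lmap (monomial (fs2 a b) r) =
      if a = 0 then
        inl (Polynomial.C r * Polynomial.X ^ b) +
          inr (Polynomial.C r * (glue19 * derivative (Polynomial.X ^ b)))
      else if a = 1 then -inr (Polynomial.C r * Polynomial.X ^ b) else 0 := by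
  rw [monomial_fs2, map_mul, map_mul, map_pow, map_pow,
    show Lmap (X 0) = -ε from aeval_X _ 0,
    show Lmap (X 1) = inl Polynomial.X + inl glue19 * ε from aeval_X _ 1,
    Lmap_C, pow_jet, neg_pow]
  rcases Nat.lt_or_ge a 2 with h | h
  · interval_cases a
    · rw [pow_zero, pow_zero, one_mul, mul_one, if_pos rfl, mul_add, inl_mul_inl, inl_mul_inr]
      rw [smul_eq_mul]
    · rw [pow_one, pow_one, if_neg one_ne_zero, if_pos rfl]
      refine TrivSqZeroExt.ext ?_ ?_ <;>
        simp [fst_mul, DualNumber.snd_mul] <;> ring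
  · rw [eps_pow_eq_zero h, mul_zero, mul_zero, zero_mul,
      if_neg (by omega), if_neg (by omega)]

/-- the two jet components along `u = 0` -/
def cpoly (f : M2) : PR := fst (Nmap f)
def epoly (f : M2) : PR := snd (Nmap f)
/-- the two jet components along `v = 0` -/
def bpoly (f : M2) : PR := fst (Rmap f)
def dpoly (f : M2) : PR := snd (Rmap f)

/-- The key structural identity: the twisted jet `Lmap` is determined by the jet along `u = 0`. -/
lemma Lmap_eq (f : M2) :
    Lmap f = inl (cpoly f) + inr (glue19 * derivative (cpoly f) - epoly f) := by
  unfold cpoly epoly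
  induction f using MvPolynomial.induction_on' with
  | monomial u r =>
    rw [eq_fs2 u, Lmap_monomial, Nmap_monomial]
    by_cases h0 : u 0 = 0
    · rw [if_pos h0, if_pos h0]
      refine TrivSqZeroExt.ext ?_ ?_ <;> simp <;> ring
    · by_cases h1 : u 0 = 1
      · rw [if_neg h0, if_neg h0, if_pos h1, if_pos h1]
        refine TrivSqZeroExt.ext ?_ ?_ <;> simp
      · rw [if_neg h0, if_neg h0, if_neg h1, if_neg h1]
        refine TrivSqZeroExt.ext ?_ ?_ <;> simp
  | add p q hp hq =>
    rw [map_add, map_add, hp, hq]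
    refine TrivSqZeroExt.ext ?_ ?_ <;> simp <;> ring

lemma coeff_cpoly (f : M2) (k : ℕ) : (cpoly f).coeff k = f.coeff (fs2 0 k) := by
  unfold cpoly
  induction f using MvPolynomial.induction_on' with
  | monomial u r =>
    rw [eq_fs2 u, Nmap_monomial, MvPolynomial.coeff_monomial]
    by_cases h0 : u 0 = 0
    · rw [if_pos h0]
      simp only [fst_inl, Polynomial.coeff_C_mul, Polynomial.coeff_X_pow]
      by_cases hk : u 1 = k
      · rw [if_pos hk.symm, if_pos (fs2_inj.mpr ⟨h0, hk⟩), mul_one]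
      · rw [if_neg (fun h => hk h.symm), if_neg (fun h => hk (fs2_inj.mp h).2), mul_zero]
    · have : ¬ (fs2 (u 0) (u 1) = fs2 0 k) := fun h => h0 (fs2_inj.mp h).1
      rw [if_neg this]
      by_cases h1 : u 0 = 1
      · rw [if_neg h0, if_pos h1]; simp
      · rw [if_neg h0, if_neg h1]; simp
  | add p q hp hq => simp [map_add, hp, hq]

lemma coeff_epoly (f : M2) (k : ℕ) : (epoly f).coeff k = f.coeff (fs2 1 k) := by
  unfold epoly
  induction f using MvPolynomial.induction_on' with
  | monomial u r =>
    rw [eq_fs2 u, Nmap_monomial, MvPolynomial.coeff_monomial]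
    by_cases h1 : u 0 = 1
    · rw [if_neg (by rw [h1]; exact one_ne_zero), if_pos h1]
      simp only [snd_inr, Polynomial.coeff_C_mul, Polynomial.coeff_X_pow]
      by_cases hk : u 1 = k
      · rw [if_pos hk.symm, if_pos (fs2_inj.mpr ⟨h1, hk⟩), mul_one]
      · rw [if_neg (fun h => hk h.symm), if_neg (fun h => hk (fs2_inj.mp h).2), mul_zero]
    · have : ¬ (fs2 (u 0) (u 1) = fs2 1 k) := fun h => h1 (fs2_inj.mp h).1
      rw [if_neg this]
      by_cases h0 : u 0 = 0
      · rw [if_pos h0]; simp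
      · rw [if_neg h0, if_neg h1]; simp
  | add p q hp hq => simp [map_add, hp, hq]

lemma coeff_bpoly (f : M2) (k : ℕ) : (bpoly f).coeff k = f.coeff (fs2 k 0) := by
  unfold bpoly
  induction f using MvPolynomial.induction_on' with
  | monomial u r =>
    rw [eq_fs2 u, Rmap_monomial, MvPolynomial.coeff_monomial]
    by_cases h0 : u 1 = 0
    · rw [if_pos h0]
      simp only [fst_inl, Polynomial.coeff_C_mul, Polynomial.coeff_X_pow]
      by_cases hk : u 0 = k
      · rw [if_pos hk.symm, if_pos (fs2_inj.mpr ⟨hk, h0⟩), mul_one]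
      · rw [if_neg (fun h => hk h.symm), if_neg (fun h => hk (fs2_inj.mp h).1), mul_zero]
    · have : ¬ (fs2 (u 0) (u 1) = fs2 k 0) := fun h => h0 (fs2_inj.mp h).2
      rw [if_neg this]
      by_cases h1 : u 1 = 1
      · rw [if_neg h0, if_pos h1]; simp
      · rw [if_neg h0, if_neg h1]; simp
  | add p q hp hq => simp [map_add, hp, hq]

lemma coeff_dpoly (f : M2) (k : ℕ) : (dpoly f).coeff k = f.coeff (fs2 k 1) := by
  unfold dpoly
  induction f using MvPolynomial.induction_on' with
  | monomial u r =>
    rw [eq_fs2 u, Rmap_monomial, MvPolynomial.coeff_monomial]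
    by_cases h1 : u 1 = 1
    · rw [if_neg (by rw [h1]; exact one_ne_zero), if_pos h1]
      simp only [snd_inr, Polynomial.coeff_C_mul, Polynomial.coeff_X_pow]
      by_cases hk : u 0 = k
      · rw [if_pos hk.symm, if_pos (fs2_inj.mpr ⟨hk, h1⟩), mul_one]
      · rw [if_neg (fun h => hk h.symm), if_neg (fun h => hk (fs2_inj.mp h).1), mul_zero]
    · have : ¬ (fs2 (u 0) (u 1) = fs2 k 1) := fun h => h1 (fs2_inj.mp h).2
      rw [if_neg this]
      by_cases h0 : u 1 = 0
      · rw [if_pos h0]; simp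
      · rw [if_neg h0, if_neg h1]; simp
  | add p q hp hq => simp [map_add, hp, hq]

lemma Paeval_inlX (p : PR) :
    Polynomial.aeval (inl Polynomial.X : DA) p = inl p := by
  rw [show (inl Polynomial.X : DA) = inlAlgHom ℝ PR PR Polynomial.X from rfl,
    Polynomial.aeval_algHom_apply, Polynomial.aeval_X_left_apply]
  rfl

lemma Paeval_eps (p : PR) :
    Polynomial.aeval (ε : DA) p =
      inl (Polynomial.C (p.coeff 0)) + inr (Polynomial.C (p.coeff 1)) := by
  induction p using Polynomial.induction_on' with
  | monomial n a =>
    rw [Polynomial.aeval_monomial]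
    have hA : (algebraMap ℝ DA) a = inl (Polynomial.C a) := rfl
    rcases Nat.lt_or_ge n 2 with h | h
    · interval_cases n
      · rw [pow_zero, mul_one, hA]
        refine TrivSqZeroExt.ext ?_ ?_ <;> simp [Polynomial.coeff_monomial]
      · rw [pow_one, hA, inl_mul_eps]
        refine TrivSqZeroExt.ext ?_ ?_ <;> simp [Polynomial.coeff_monomial]
    · rw [eps_pow_eq_zero h, mul_zero]
      refine TrivSqZeroExt.ext ?_ ?_ <;>
        · simp only [fst_zero, snd_zero, fst_add, snd_add, fst_inl, snd_inl, fst_inr, snd_inr,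
            Polynomial.coeff_monomial, zero_add, add_zero]
          rw [if_neg (by omega), map_zero]
  | add p q hp hq =>
    rw [map_add, hp, hq]
    refine TrivSqZeroExt.ext ?_ ?_ <;> simp <;> ring

lemma Nmap_aeval0 (p : PR) :
    Nmap (Polynomial.aeval (MvPolynomial.X 0) p) = Polynomial.aeval (ε : DA) p := by
  rw [← Polynomial.aeval_algHom_apply,
    show Nmap (MvPolynomial.X 0) = (ε : DA) from MvPolynomial.aeval_X _ 0]

lemma Nmap_aeval1 (p : PR) :
    Nmap (Polynomial.aeval (MvPolynomial.X 1) p) = inl p := by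
  rw [← Polynomial.aeval_algHom_apply, show Nmap (MvPolynomial.X 1) = inl Polynomial.X from
    aeval_X _ 1, Paeval_inlX]

lemma Rmap_aeval0 (p : PR) :
    Rmap (Polynomial.aeval (MvPolynomial.X 0) p) = inl p := by
  rw [← Polynomial.aeval_algHom_apply, show Rmap (MvPolynomial.X 0) = inl Polynomial.X from
    aeval_X _ 0, Paeval_inlX]

lemma Rmap_aeval1 (p : PR) :
    Rmap (Polynomial.aeval (MvPolynomial.X 1) p) = Polynomial.aeval (ε : DA) p := by
  rw [← Polynomial.aeval_algHom_apply,
    show Rmap (MvPolynomial.X 1) = (ε : DA) from MvPolynomial.aeval_X _ 1]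

end
end Aux19

namespace Aux19
open MvPolynomial Polynomial TrivSqZeroExt DualNumber
noncomputable section

abbrev M6 : Type := MvPolynomial (ZMod 3 × Fin 2) ℝ

lemma succ_ne_self (i : ZMod 3) : i + 1 ≠ i := by revert i; decide

/-- evaluation of the big ring realizing the transition relations of edge `i` -/
def phifun (i : ZMod 3) : ZMod 3 × Fin 2 → DA :=
  fun p => if p.1 = i then ![-ε, inl Polynomial.X + inl glue19 * ε] p.2
    else if p.1 = i + 1 then ![inl Polynomial.X, ε] p.2 else 0

def phi (i : ZMod 3) : M6 →ₐ[ℝ] DA := MvPolynomial.aeval (phifun i)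

lemma phi_uv_i (i : ZMod 3) : phi i (uv i) = -ε := by
  simp [phi, phifun, uv]

lemma phi_vv_i (i : ZMod 3) : phi i (vv i) = inl Polynomial.X + inl glue19 * ε := by
  simp [phi, phifun, vv]

lemma phi_uv_i1 (i : ZMod 3) : phi i (uv (i + 1)) = inl Polynomial.X := by
  simp [phi, phifun, uv, succ_ne_self i]

lemma phi_vv_i1 (i : ZMod 3) : phi i (vv (i + 1)) = ε := by
  simp [phi, phifun, vv, succ_ne_self i]

lemma phi_rename_i (i : ZMod 3) (f : M2) :
    phi i (rename (fun j : Fin 2 => (i, j)) f) = Lmap f := by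
  rw [phi, MvPolynomial.aeval_rename,
    show (phifun i ∘ fun j : Fin 2 => (i, j)) = ![-ε, inl Polynomial.X + inl glue19 * ε] by
      funext j; fin_cases j <;> simp [phifun]]
  rfl

lemma phi_rename_i1 (i : ZMod 3) (f : M2) :
    phi i (rename (fun j : Fin 2 => (i + 1, j)) f) = Rmap f := by
  rw [phi, MvPolynomial.aeval_rename,
    show (phifun i ∘ fun j : Fin 2 => (i + 1, j)) = ![inl Polynomial.X, ε] by
      funext j; fin_cases j <;> simp [phifun, succ_ne_self i]]
  rfl

lemma phi_edgeDiff (i : ZMod 3) (f : ZMod 3 → M2) :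
    phi i (edgeDiff19 i f) = Lmap (f i) - Rmap (f (i + 1)) := by
  rw [edgeDiff19, LinearMap.sub_apply, map_sub, LinearMap.comp_apply, LinearMap.comp_apply]
  rw [LinearMap.proj_apply, LinearMap.proj_apply, AlgHom.toLinearMap_apply,
    AlgHom.toLinearMap_apply, phi_rename_i, phi_rename_i1]

lemma phi_gen2 (i : ZMod 3) :
    phi i (vv i - uv (i + 1) - vv (i + 1) * Polynomial.aeval (uv (i + 1)) glue19) = 0 := by
  rw [map_sub, map_sub, map_mul, phi_vv_i, phi_uv_i1, phi_vv_i1,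
    ← Polynomial.aeval_algHom_apply, phi_uv_i1, Paeval_inlX]
  rw [mul_comm]
  ring

lemma Iedge_le_ker (i : ZMod 3) : ∀ x ∈ Iedge19 i, phi i x = 0 := by
  intro x hx
  have : Iedge19 i ≤ RingHom.ker (phi i).toRingHom := by
    rw [Iedge19, Ideal.span_le]
    rintro y (rfl | rfl | rfl | rfl) <;> rw [SetLike.mem_coe, RingHom.mem_ker]
    · show phi i _ = 0
      rw [map_add, phi_uv_i, phi_vv_i1, neg_add_cancel]
    · exact phi_gen2 i
    · show phi i _ = 0
      rw [map_pow, phi_uv_i, neg_pow, eps_pow_eq_zero le_rfl, mul_zero]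
    · show phi i _ = 0
      rw [map_pow, phi_vv_i1, eps_pow_eq_zero le_rfl]
  exact this hx

/-- canonical representative section of `phi` -/
def sig (i : ZMod 3) (z : DA) : M6 :=
  Polynomial.aeval (uv (i + 1)) (fst z) + vv (i + 1) * Polynomial.aeval (uv (i + 1)) (snd z)

lemma sig_zero (i : ZMod 3) : sig i 0 = 0 := by simp [sig]

lemma sig_add (i : ZMod 3) (z w : DA) : sig i (z + w) = sig i z + sig i w := by
  simp [sig]; ring

lemma sig_mul_defect (i : ZMod 3) (z w : DA) :
    sig i z * sig i w - sig i (z * w) ∈ Iedge19 i := by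
  have h : sig i z * sig i w - sig i (z * w) =
      (vv (i + 1)) ^ 2 * (Polynomial.aeval (uv (i + 1)) (snd z) *
        Polynomial.aeval (uv (i + 1)) (snd w)) := by
    rw [sig, sig, sig, fst_mul, DualNumber.snd_mul, map_add, map_mul, map_mul, map_mul]
    ring
  rw [h]
  exact Ideal.mul_mem_right _ _ (Ideal.subset_span (by simp))

lemma key_adjoin (i : ZMod 3) :
    ∀ g ∈ Algebra.adjoin ℝ ({uv i, vv i, uv (i + 1), vv (i + 1)} : Set M6),
      g - sig i (phi i g) ∈ Iedge19 i := by
  intro g hg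
  induction hg using Algebra.adjoin_induction with
  | mem x hx =>
    rcases hx with rfl | rfl | rfl | rfl
    · rw [phi_uv_i]
      have : sig i (-ε) = -(vv (i + 1)) := by
        simp [sig]
      rw [this, sub_neg_eq_add]
      exact Ideal.subset_span (by simp)
    · rw [phi_vv_i]
      have : sig i (inl Polynomial.X + inl glue19 * ε) =
          uv (i + 1) + vv (i + 1) * Polynomial.aeval (uv (i + 1)) glue19 := by
        rw [sig]
        have h1 : fst (inl Polynomial.X + inl glue19 * ε : DA) = Polynomial.X := by simp
        have h2 : snd (inl Polynomial.X + inl glue19 * ε : DA) = glue19 := by simp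
        rw [h1, h2, Polynomial.aeval_X]
      rw [this, ← sub_sub]
      exact Ideal.subset_span (by simp)
    · rw [phi_uv_i1]
      have : sig i (inl Polynomial.X) = uv (i + 1) := by simp [sig]
      rw [this, sub_self]
      exact zero_mem _
    · rw [phi_vv_i1]
      have : sig i ε = vv (i + 1) := by simp [sig]
      rw [this, sub_self]
      exact zero_mem _
  | algebraMap r =>
    have : phi i (algebraMap ℝ M6 r) = inl (Polynomial.C r) := (phi i).commutes r
    rw [this]
    have : sig i (inl (Polynomial.C r)) = algebraMap ℝ M6 r := by
      simp [sig]
    rw [this, sub_self]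
    exact zero_mem _
  | add x y hx hy ihx ihy =>
    rw [map_add, sig_add, show x + y - (sig i (phi i x) + sig i (phi i y)) =
      (x - sig i (phi i x)) + (y - sig i (phi i y)) by ring]
    exact add_mem ihx ihy
  | mul x y hx hy ihx ihy =>
    rw [map_mul, show x * y - sig i (phi i x * phi i y) =
      x * (y - sig i (phi i y)) + sig i (phi i y) * (x - sig i (phi i x)) +
        (sig i (phi i x) * sig i (phi i y) - sig i (phi i x * phi i y)) by ring]
    exact add_mem (add_mem (Ideal.mul_mem_left _ _ ihy) (Ideal.mul_mem_left _ _ ihx))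
      (sig_mul_defect i _ _)

lemma rename_mem_adjoin (i k : ZMod 3) (f : M2)
    (h0 : MvPolynomial.X (k, (0 : Fin 2)) ∈
      Algebra.adjoin ℝ ({uv i, vv i, uv (i + 1), vv (i + 1)} : Set M6))
    (h1 : MvPolynomial.X (k, (1 : Fin 2)) ∈
      Algebra.adjoin ℝ ({uv i, vv i, uv (i + 1), vv (i + 1)} : Set M6)) :
    rename (fun j : Fin 2 => (k, j)) f ∈
      Algebra.adjoin ℝ ({uv i, vv i, uv (i + 1), vv (i + 1)} : Set M6) := by
  induction f using MvPolynomial.induction_on with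
  | C a => rw [rename_C]; exact Subalgebra.algebraMap_mem _ a
  | add p q hp hq => rw [map_add]; exact add_mem hp hq
  | mul_X p n hp =>
    rw [map_mul, rename_X]
    refine mul_mem hp ?_
    fin_cases n
    · exact h0
    · exact h1

lemma mem_Iedge_iff (i : ZMod 3) (f : ZMod 3 → M2) :
    edgeDiff19 i f ∈ Iedge19 i ↔ Lmap (f i) = Rmap (f (i + 1)) := by
  constructor
  · intro h
    have := Iedge_le_ker i _ h
    rw [phi_edgeDiff, sub_eq_zero] at this
    exact this
  · intro h
    have hadj : edgeDiff19 i f ∈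
        Algebra.adjoin ℝ ({uv i, vv i, uv (i + 1), vv (i + 1)} : Set M6) := by
      rw [edgeDiff19, LinearMap.sub_apply, LinearMap.comp_apply, LinearMap.comp_apply,
        LinearMap.proj_apply, LinearMap.proj_apply, AlgHom.toLinearMap_apply,
        AlgHom.toLinearMap_apply]
      refine sub_mem ?_ ?_
      · exact rename_mem_adjoin i i (f i)
          (Algebra.subset_adjoin (by simp [uv])) (Algebra.subset_adjoin (by simp [vv]))
      · exact rename_mem_adjoin i (i + 1) (f (i + 1))
          (Algebra.subset_adjoin (by simp [uv])) (Algebra.subset_adjoin (by simp [vv]))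
    have hk := key_adjoin i _ hadj
    rw [phi_edgeDiff, h, sub_self, sig_zero, sub_zero] at hk
    exact hk

end
end Aux19

namespace Aux19
open MvPolynomial Polynomial TrivSqZeroExt DualNumber
noncomputable section

def tail2 (q : PR) : PR := q - Polynomial.C (q.coeff 0) - Polynomial.C (q.coeff 1) * Polynomial.X

lemma Paeval_eps_tail2 (q : PR) : Polynomial.aeval (ε : DA) (tail2 q) = 0 := by
  rw [Paeval_eps]
  have h0 : (tail2 q).coeff 0 = 0 := by simp [tail2]
  have h1 : (tail2 q).coeff 1 = 0 := by simp [tail2]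
  rw [h0, h1]
  simp

lemma tail2_expand (q : PR) :
    q = Polynomial.C (q.coeff 0) + Polynomial.C (q.coeff 1) * Polynomial.X + tail2 q := by
  rw [tail2]; ring

/-- the natural `D`-jet induced through an edge by jet data on the previous face -/
def Dpol (cp Ep : PR) : PR := glue19 * derivative cp - Ep

/-- reconstruction of a face polynomial from jet data: `c`-jet of this face, `c,E`-jets of
the previous face, `E`-jet of this face. -/
def Jrec (cp c Ep E : PR) : M2 :=
  Polynomial.aeval (MvPolynomial.X 1) c + Polynomial.aeval (MvPolynomial.X 0) cp
    - MvPolynomial.C (cp.coeff 0)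
    + MvPolynomial.X 1 * Polynomial.aeval (MvPolynomial.X 0) (tail2 (Dpol cp Ep))
    + MvPolynomial.X 0 * Polynomial.aeval (MvPolynomial.X 1) (tail2 E)
    + MvPolynomial.C (E.coeff 1) * (MvPolynomial.X 0 * MvPolynomial.X 1)

lemma Nmap_X0_mul (t : M2) : Nmap (MvPolynomial.X 0 * t) = ε * Nmap t := by
  rw [map_mul, show Nmap (MvPolynomial.X 0) = ε from aeval_X _ 0]

lemma Nmap_Jrec (cp c Ep E : PR) (h : E.coeff 0 = cp.coeff 1) :
    Nmap (Jrec cp c Ep E) = inl c + inr E := by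
  rw [Jrec]
  simp only [map_add, map_sub, map_mul]
  rw [Nmap_aeval1, Nmap_aeval0, Nmap_C, Nmap_aeval0, Paeval_eps_tail2, Nmap_aeval1,
    show Nmap (MvPolynomial.X 0) = ε from aeval_X _ 0,
    show Nmap (MvPolynomial.X 1) = inl Polynomial.X from aeval_X _ 1,
    Paeval_eps cp, mul_zero, Nmap_C]
  refine TrivSqZeroExt.ext ?_ ?_
  · simp [fst_mul]
  · simp only [snd_add, snd_sub, snd_inl, snd_inr, fst_add, fst_sub, fst_inl, fst_inr,
      DualNumber.snd_mul, fst_mul, fst_eps, snd_eps, sub_zero, add_zero, zero_add,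
      zero_mul, mul_zero, mul_one, one_mul, zero_sub, neg_zero]
    rw [show Polynomial.C (cp.coeff 1) = Polynomial.C (E.coeff 0) from congrArg _ h.symm]
    conv_rhs => rw [tail2_expand E]
    ring

lemma Rmap_Jrec (cp c Ep E : PR) (hA : c.coeff 0 = cp.coeff 0)
    (hB : (Dpol cp Ep).coeff 0 = c.coeff 1) (hD : (Dpol cp Ep).coeff 1 = E.coeff 1) :
    Rmap (Jrec cp c Ep E) = inl cp + inr (Dpol cp Ep) := by
  rw [Jrec]
  simp only [map_add, map_sub, map_mul]
  rw [Rmap_aeval1, Rmap_aeval0, Rmap_C, Rmap_aeval0, Rmap_aeval1, Paeval_eps_tail2,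
    show Rmap (MvPolynomial.X 0) = inl Polynomial.X from aeval_X _ 0,
    show Rmap (MvPolynomial.X 1) = ε from aeval_X _ 1,
    Paeval_eps c, mul_zero, Rmap_C]
  refine TrivSqZeroExt.ext ?_ ?_
  · simp [fst_mul, hA]
  · simp only [snd_add, snd_sub, snd_inl, snd_inr, fst_add, fst_sub, fst_inl, fst_inr,
      DualNumber.snd_mul, fst_mul, fst_eps, snd_eps, sub_zero, add_zero, zero_add,
      zero_mul, mul_zero, mul_one, one_mul, zero_sub, neg_zero]
    rw [show Polynomial.C (c.coeff 1) = Polynomial.C ((Dpol cp Ep).coeff 0) from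
      congrArg _ hB.symm,
      show Polynomial.C (E.coeff 1) = Polynomial.C ((Dpol cp Ep).coeff 1) from
      congrArg _ hD.symm]
    conv_rhs => rw [tail2_expand (Dpol cp Ep)]
    ring

/-! coefficients of `glue19` -/

lemma glue19_eq : glue19 = Polynomial.C (-1) + Polynomial.C 2 * Polynomial.X
    - Polynomial.X ^ 2 := by
  rw [glue19, show Polynomial.C (-1 : ℝ) = -1 from by simp,
    show Polynomial.C (2 : ℝ) = 2 from map_ofNat _ 2]
  ring

lemma glue19_coeff0 : glue19.coeff 0 = -1 := by
  rw [glue19_eq]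
  simp

lemma glue19_coeff1 : glue19.coeff 1 = 2 := by
  rw [glue19_eq]
  simp [Polynomial.coeff_one]

lemma coeff_mul_one' (p q : PR) :
    (p * q).coeff 1 = p.coeff 0 * q.coeff 1 + p.coeff 1 * q.coeff 0 := by
  rw [Polynomial.coeff_mul]
  rw [show Finset.HasAntidiagonal.antidiagonal (1 : ℕ) = {(0,1), (1,0)} from rfl]
  simp

lemma Dpol_coeff0 (cp Ep : PR) : (Dpol cp Ep).coeff 0 = -cp.coeff 1 - Ep.coeff 0 := by
  rw [Dpol, Polynomial.coeff_sub, Polynomial.mul_coeff_zero, glue19_coeff0,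
    Polynomial.coeff_derivative]
  ring

lemma Dpol_coeff1 (cp Ep : PR) :
    (Dpol cp Ep).coeff 1 = 2 * cp.coeff 1 - 2 * cp.coeff 2 - Ep.coeff 1 := by
  rw [Dpol, Polynomial.coeff_sub, coeff_mul_one', glue19_coeff0, glue19_coeff1,
    Polynomial.coeff_derivative, Polynomial.coeff_derivative]
  ring

/-! support membership helpers -/

lemma mem_restrictSupport_iff (s : Set (Fin 2 →₀ ℕ)) (p : M2) :
    p ∈ restrictSupport ℝ s ↔ ∀ m ∉ s, MvPolynomial.coeff m p = 0 :=
  ⟨fun h m hm => by_contra fun h' => hm (h (MvPolynomial.mem_support_iff.mpr h')),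
    fun h m hm => by_contra fun hm' => MvPolynomial.mem_support_iff.mp hm (h m hm')⟩

lemma monomial_mem_restrictSupport (s : Set (Fin 2 →₀ ℕ)) (m : Fin 2 →₀ ℕ) (r : ℝ)
    (h : m ∈ s) : (monomial m r : M2) ∈ restrictSupport ℝ s := by
  rw [mem_restrictSupport_iff]
  intro m' hm'
  rw [MvPolynomial.coeff_monomial, if_neg]
  rintro rfl; exact hm' h

lemma aeval1_eq_sum (p : PR) :
    Polynomial.aeval (MvPolynomial.X 1 : M2) p = p.sum fun e a => monomial (fs2 0 e) a := by
  rw [Polynomial.aeval_def, Polynomial.eval₂_eq_sum]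
  congr 1
  funext e a
  rw [monomial_fs2, pow_zero, mul_one]
  rfl

lemma aeval0_eq_sum (p : PR) :
    Polynomial.aeval (MvPolynomial.X 0 : M2) p = p.sum fun e a => monomial (fs2 e 0) a := by
  rw [Polynomial.aeval_def, Polynomial.eval₂_eq_sum]
  congr 1
  funext e a
  rw [monomial_fs2, pow_zero, mul_one]
  rfl

lemma aeval1_mem (s : Set (Fin 2 →₀ ℕ)) (p : PR)
    (h : ∀ k, p.coeff k ≠ 0 → fs2 0 k ∈ s) :
    Polynomial.aeval (MvPolynomial.X 1 : M2) p ∈ restrictSupport ℝ s := by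
  rw [aeval1_eq_sum, Polynomial.sum]
  refine Submodule.sum_mem _ fun e he => monomial_mem_restrictSupport _ _ _
    (h e (Polynomial.mem_support_iff.mp he))

lemma aeval0_mem (s : Set (Fin 2 →₀ ℕ)) (p : PR)
    (h : ∀ k, p.coeff k ≠ 0 → fs2 k 0 ∈ s) :
    Polynomial.aeval (MvPolynomial.X 0 : M2) p ∈ restrictSupport ℝ s := by
  rw [aeval0_eq_sum, Polynomial.sum]
  refine Submodule.sum_mem _ fun e he => monomial_mem_restrictSupport _ _ _
    (h e (Polynomial.mem_support_iff.mp he))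

lemma X1_mul_aeval0_mem (s : Set (Fin 2 →₀ ℕ)) (p : PR)
    (h : ∀ k, p.coeff k ≠ 0 → fs2 k 1 ∈ s) :
    MvPolynomial.X 1 * Polynomial.aeval (MvPolynomial.X 0 : M2) p ∈ restrictSupport ℝ s := by
  rw [aeval0_eq_sum, Polynomial.sum, Finset.mul_sum]
  refine Submodule.sum_mem _ fun e he => ?_
  have hexp : Finsupp.single (1 : Fin 2) 1 + fs2 e 0 = fs2 e 1 := by
    ext j; fin_cases j <;> simp [fs2, Finsupp.single_apply]
  have : (MvPolynomial.X 1 : M2) * monomial (fs2 e 0) (p.coeff e)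
      = monomial (fs2 e 1) (p.coeff e) := by
    rw [MvPolynomial.X, monomial_mul, one_mul, hexp]
  rw [this]
  exact monomial_mem_restrictSupport _ _ _ (h e (Polynomial.mem_support_iff.mp he))

lemma X0_mul_aeval1_mem (s : Set (Fin 2 →₀ ℕ)) (p : PR)
    (h : ∀ k, p.coeff k ≠ 0 → fs2 1 k ∈ s) :
    MvPolynomial.X 0 * Polynomial.aeval (MvPolynomial.X 1 : M2) p ∈ restrictSupport ℝ s := by
  rw [aeval1_eq_sum, Polynomial.sum, Finset.mul_sum]
  refine Submodule.sum_mem _ fun e he => ?_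
  have hexp : Finsupp.single (0 : Fin 2) 1 + fs2 0 e = fs2 1 e := by
    ext j; fin_cases j <;> simp [fs2, Finsupp.single_apply]
  have : (MvPolynomial.X 0 : M2) * monomial (fs2 0 e) (p.coeff e)
      = monomial (fs2 1 e) (p.coeff e) := by
    rw [MvPolynomial.X, monomial_mul, one_mul, hexp]
  rw [this]
  exact monomial_mem_restrictSupport _ _ _ (h e (Polynomial.mem_support_iff.mp he))

lemma C_mem_restrictSupport (s : Set (Fin 2 →₀ ℕ)) (r : ℝ) (h : fs2 0 0 ∈ s) :
    (MvPolynomial.C r : M2) ∈ restrictSupport ℝ s := by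
  have : (MvPolynomial.C r : M2) = monomial (fs2 0 0) r := by
    rw [monomial_fs2]; simp
  rw [this]
  exact monomial_mem_restrictSupport _ _ _ h

lemma X0X1_mem_restrictSupport (s : Set (Fin 2 →₀ ℕ)) (r : ℝ) (h : fs2 1 1 ∈ s) :
    (MvPolynomial.C r : M2) * (MvPolynomial.X 0 * MvPolynomial.X 1) ∈ restrictSupport ℝ s := by
  have : (MvPolynomial.C r : M2) * (MvPolynomial.X 0 * MvPolynomial.X 1)
      = monomial (fs2 1 1) r := by
    rw [monomial_fs2]; ring
  rw [this]
  exact monomial_mem_restrictSupport _ _ _ h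

end
end Aux19

namespace Aux19
open MvPolynomial Polynomial TrivSqZeroExt DualNumber
noncomputable section

lemma Nmap_eq_zero_of_interior {s : Set (Fin 2 →₀ ℕ)} (p : M2)
    (hp : p ∈ restrictSupport ℝ s) (hs : ∀ m ∈ s, 2 ≤ m 0) : Nmap p = 0 := by
  rw [← support_sum_monomial_coeff p, map_sum]
  refine Finset.sum_eq_zero fun m hm => ?_
  have hsupp : ↑p.support ⊆ s := hp
  have h2 : 2 ≤ m 0 := hs m (hsupp hm)
  rw [eq_fs2 m, Nmap_monomial, if_neg (by omega), if_neg (by omega)]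

lemma Rmap_eq_zero_of_interior {s : Set (Fin 2 →₀ ℕ)} (p : M2)
    (hp : p ∈ restrictSupport ℝ s) (hs : ∀ m ∈ s, 2 ≤ m 1) : Rmap p = 0 := by
  rw [← support_sum_monomial_coeff p, map_sum]
  refine Finset.sum_eq_zero fun m hm => ?_
  have hsupp : ↑p.support ⊆ s := hp
  have h2 : 2 ≤ m 1 := hs m (hsupp hm)
  rw [eq_fs2 m, Rmap_monomial, if_neg (by omega), if_neg (by omega)]

lemma glue19_ne_zero : glue19 ≠ 0 := by
  intro h
  have := glue19_coeff0
  rw [h] at this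
  simp at this

lemma natDegree_glue19 : glue19.natDegree = 2 := by
  have h1 : (1 - Polynomial.X : PR) = -(Polynomial.X - Polynomial.C 1) := by
    rw [Polynomial.C_1]; ring
  rw [glue19, natDegree_neg, natDegree_pow, h1, natDegree_neg, natDegree_X_sub_C]

lemma coeff_eq_zero_of_mem_degreeLT {p : PR} {n k : ℕ} (hp : p ∈ degreeLT ℝ n)
    (hk : n ≤ k) : p.coeff k = 0 := by
  refine Polynomial.coeff_eq_zero_of_degree_lt ?_
  exact lt_of_lt_of_le (Polynomial.mem_degreeLT.mp hp) (Nat.cast_le.mpr hk)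

lemma mem_degreeLT_of_natDegree_le {p : PR} {n : ℕ} (h : p.natDegree ≤ n) :
    p ∈ degreeLT ℝ (n + 1) := by
  rcases eq_or_ne p 0 with rfl | hp
  · exact Submodule.zero_mem _
  · rw [Polynomial.mem_degreeLT, Polynomial.degree_eq_natDegree hp]
    exact_mod_cast Nat.lt_succ_of_le h

lemma mem_degreeLT_of_coeff {p : PR} {n : ℕ} (h : ∀ k, n < k → p.coeff k = 0) :
    p ∈ degreeLT ℝ (n + 1) :=
  mem_degreeLT_of_natDegree_le (natDegree_le_iff_coeff_eq_zero.mpr h)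

lemma tail2_coeff_of_two_le {q : PR} {k : ℕ} (hk : 2 ≤ k) : (tail2 q).coeff k = q.coeff k := by
  rw [tail2, Polynomial.coeff_sub, Polynomial.coeff_sub, Polynomial.coeff_C,
    if_neg (by omega), Polynomial.coeff_C_mul, Polynomial.coeff_X, if_neg (by omega)]
  ring

lemma Dpol_coeff_eq_zero {cp Ep : PR} {nc nE : ℕ} (hnc : 1 ≤ nc) (hE : nc + 1 = nE)
    (hc : cp ∈ degreeLT ℝ (nc + 1)) (hEp : Ep ∈ degreeLT ℝ (nE + 1))
    {k : ℕ} (hk : nE < k) : (Dpol cp Ep).coeff k = 0 := by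
  rw [Dpol, Polynomial.coeff_sub, coeff_eq_zero_of_mem_degreeLT hEp (by omega), sub_zero]
  refine Polynomial.coeff_eq_zero_of_natDegree_lt ?_
  have hcp : cp.natDegree ≤ nc := by
    rcases eq_or_ne cp 0 with rfl | h0
    · simp
    · have := Polynomial.mem_degreeLT.mp hc
      rw [Polynomial.degree_eq_natDegree h0, Nat.cast_lt] at this
      omega
  have hder : (derivative cp).natDegree ≤ nc - 1 :=
    le_trans (Polynomial.natDegree_derivative_le cp) (by omega)
  have h1 : (glue19 * derivative cp).natDegree ≤ glue19.natDegree + (derivative cp).natDegree :=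
    Polynomial.natDegree_mul_le
  rw [natDegree_glue19] at h1
  omega

/-- membership of the jet reconstruction in the degree-restricted space -/
lemma Jrec_mem (S : Set (Fin 2 →₀ ℕ)) (nc nE : ℕ) (hnc : 1 ≤ nc) (hE : nc + 1 = nE)
    (h0S : ∀ k ≤ nc, fs2 0 k ∈ S) (h0S' : ∀ j ≤ nc, fs2 j 0 ∈ S)
    (h1S : ∀ k ≤ nE, fs2 1 k ∈ S) (h1S' : ∀ j ≤ nE, fs2 j 1 ∈ S)
    (cp c Ep E : PR) (hcp : cp ∈ degreeLT ℝ (nc + 1)) (hc : c ∈ degreeLT ℝ (nc + 1))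
    (hEp : Ep ∈ degreeLT ℝ (nE + 1)) (hEc : E ∈ degreeLT ℝ (nE + 1)) :
    Jrec cp c Ep E ∈ restrictSupport ℝ S := by
  rw [Jrec]
  refine Submodule.add_mem _ (Submodule.add_mem _ (Submodule.add_mem _ (Submodule.sub_mem _
    (Submodule.add_mem _ ?_ ?_) ?_) ?_) ?_) ?_
  · refine aeval1_mem _ _ fun k hk => h0S k ?_
    by_contra h
    exact hk (coeff_eq_zero_of_mem_degreeLT hc (by omega))
  · refine aeval0_mem _ _ fun k hk => h0S' k ?_
    by_contra h
    exact hk (coeff_eq_zero_of_mem_degreeLT hcp (by omega))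
  · exact C_mem_restrictSupport _ _ (h0S 0 (by omega))
  · refine X1_mul_aeval0_mem _ _ fun k hk => h1S' k ?_
    by_contra h
    refine hk ?_
    rcases Nat.lt_or_ge k 2 with h2 | h2
    · interval_cases k <;> simp [tail2]
    · rw [tail2_coeff_of_two_le h2]
      exact Dpol_coeff_eq_zero hnc hE hcp hEp (by omega)
  · refine X0_mul_aeval1_mem _ _ fun k hk => h1S k ?_
    by_contra h
    refine hk ?_
    rcases Nat.lt_or_ge k 2 with h2 | h2
    · interval_cases k <;> simp [tail2]
    · rw [tail2_coeff_of_two_le h2]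
      exact coeff_eq_zero_of_mem_degreeLT hEc (by omega)
  · exact X0X1_mem_restrictSupport _ _ (h1S 1 (by omega))

lemma tail2_add (p q : PR) : tail2 (p + q) = tail2 p + tail2 q := by
  rw [tail2, tail2, tail2, Polynomial.coeff_add, Polynomial.coeff_add, map_add, map_add]
  ring

lemma tail2_smul (r : ℝ) (p : PR) : tail2 (r • p) = r • tail2 p := by
  rw [tail2, tail2, Polynomial.coeff_smul, Polynomial.coeff_smul, smul_eq_mul, smul_eq_mul,
    map_mul, map_mul, Polynomial.smul_eq_C_mul, Polynomial.smul_eq_C_mul]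
  ring

lemma Dpol_add (cp cp' Ep Ep' : PR) :
    Dpol (cp + cp') (Ep + Ep') = Dpol cp Ep + Dpol cp' Ep' := by
  rw [Dpol, Dpol, Dpol, derivative_add]
  ring

lemma Dpol_smul (r : ℝ) (cp Ep : PR) : Dpol (r • cp) (r • Ep) = r • Dpol cp Ep := by
  rw [Dpol, Dpol, derivative_smul, Polynomial.smul_eq_C_mul, Polynomial.smul_eq_C_mul,
    Polynomial.smul_eq_C_mul]
  ring

lemma Jrec_add (cp c Ep E cp' c' Ep' E' : PR) :
    Jrec (cp + cp') (c + c') (Ep + Ep') (E + E') = Jrec cp c Ep E + Jrec cp' c' Ep' E' := by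
  simp only [Jrec, Dpol_add, tail2_add, Polynomial.coeff_add, map_add]
  ring

lemma Jrec_smul (r : ℝ) (cp c Ep E : PR) :
    Jrec (r • cp) (r • c) (r • Ep) (r • E) = r • Jrec cp c Ep E := by
  simp only [Jrec, Dpol_smul, tail2_smul, Polynomial.coeff_smul, map_smul, smul_eq_mul,
    map_mul, MvPolynomial.smul_eq_C_mul, MvPolynomial.C_mul,
    MvPolynomial.algebraMap_eq]
  ring

end
end Aux19

namespace Aux19
open MvPolynomial Polynomial TrivSqZeroExt DualNumber
noncomputable section

/-- the spline space determined by a support set `S` -/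
def GG (S : Set (Fin 2 →₀ ℕ)) : Submodule ℝ (ZMod 3 → M2) :=
  (Submodule.pi Set.univ fun _ : ZMod 3 => restrictSupport ℝ S) ⊓
    ⨅ i : ZMod 3, Submodule.comap (edgeDiff19 i) (Submodule.restrictScalars ℝ (Iedge19 i))

lemma mem_GG_iff (S : Set (Fin 2 →₀ ℕ)) (f : ZMod 3 → M2) :
    f ∈ GG S ↔ (∀ i, f i ∈ restrictSupport ℝ S) ∧
      (∀ i, Lmap (f i) = Rmap (f (i + 1))) := by
  rw [GG, Submodule.mem_inf, Submodule.mem_pi]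
  constructor
  · rintro ⟨h1, h2⟩
    refine ⟨fun i => h1 i trivial, fun i => ?_⟩
    rw [← mem_Iedge_iff]
    exact (Submodule.mem_iInf _).mp h2 i
  · rintro ⟨h1, h2⟩
    refine ⟨fun i _ => h1 i, (Submodule.mem_iInf _).mpr fun i => ?_⟩
    show edgeDiff19 i f ∈ Iedge19 i
    rw [mem_Iedge_iff]
    exact h2 i

lemma Nmap_decomp (g : M2) : Nmap g = inl (cpoly g) + inr (epoly g) :=
  (inl_fst_add_inr_snd_eq (Nmap g)).symm

lemma Rmap_decomp (g : M2) : Rmap g = inl (bpoly g) + inr (dpoly g) :=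
  (inl_fst_add_inr_snd_eq (Rmap g)).symm

lemma Lmap_decomp (g : M2) : Lmap g = inl (cpoly g) + inr (Dpol (cpoly g) (epoly g)) := by
  rw [Lmap_eq, Dpol]

section cond
variable {f : ZMod 3 → M2} (hcond : ∀ i, Lmap (f i) = Rmap (f (i + 1)))
include hcond

lemma cond_c (i : ZMod 3) : cpoly (f i) = bpoly (f (i + 1)) := by
  have h := congrArg fst (hcond i)
  rwa [Lmap_decomp, Rmap_decomp, fst_add, fst_add, fst_inl, fst_inl, fst_inr, fst_inr,
    add_zero, add_zero] at h

lemma cond_D (i : ZMod 3) : Dpol (cpoly (f i)) (epoly (f i)) = dpoly (f (i + 1)) := by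
  have h := congrArg snd (hcond i)
  rwa [Lmap_decomp, Rmap_decomp, snd_add, snd_add, snd_inl, snd_inl, snd_inr, snd_inr,
    zero_add, zero_add] at h

end cond

/-- same-face jet overlap identities -/
lemma cb_coeff0 (g : M2) : (cpoly g).coeff 0 = (bpoly g).coeff 0 := by
  rw [coeff_cpoly, coeff_bpoly]

lemma eb_coeff (g : M2) : (epoly g).coeff 0 = (bpoly g).coeff 1 := by
  rw [coeff_epoly, coeff_bpoly]

lemma ed_coeff (g : M2) : (epoly g).coeff 1 = (dpoly g).coeff 1 := by
  rw [coeff_epoly, coeff_dpoly]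

lemma cd_coeff (g : M2) : (cpoly g).coeff 1 = (dpoly g).coeff 0 := by
  rw [coeff_cpoly, coeff_dpoly]

lemma gder_coeff1 (c : PR) :
    (glue19 * derivative c).coeff 1 = 2 * c.coeff 1 - 2 * c.coeff 2 := by
  rw [coeff_mul_one', glue19_coeff0, glue19_coeff1, Polynomial.coeff_derivative,
    Polynomial.coeff_derivative]
  push_cast
  ring

section degdrop
variable {S : Set (Fin 2 →₀ ℕ)} {nc nE : ℕ}
  (hnc : 1 ≤ nc) (hE : nc + 1 = nE)
  (h1S : ∀ k, fs2 1 k ∈ S ↔ k ≤ nE) (h1S' : ∀ j, fs2 j 1 ∈ S ↔ j ≤ nE)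

include h1S in
lemma epoly_mem_of {g : M2} (hg : g ∈ restrictSupport ℝ S) :
    epoly g ∈ degreeLT ℝ (nE + 1) := by
  refine mem_degreeLT_of_coeff fun k hk => ?_
  rw [coeff_epoly]
  exact (mem_restrictSupport_iff _ _).mp hg _ (fun hmem => by have := (h1S k).mp hmem; omega)

include h1S' in
lemma dpoly_coeff_zero_of {g : M2}
    (hg : g ∈ restrictSupport ℝ S) {k : ℕ} (hk : nE < k) : (dpoly g).coeff k = 0 := by
  rw [coeff_dpoly]
  exact (mem_restrictSupport_iff _ _).mp hg _ (fun hmem => by have := (h1S' k).mp hmem; omega)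

include hnc hE h1S h1S' in
lemma cpoly_mem_of {f : ZMod 3 → M2} (hf : ∀ i, f i ∈ restrictSupport ℝ S)
    (hcond : ∀ i, Lmap (f i) = Rmap (f (i + 1))) (i : ZMod 3) :
    cpoly (f i) ∈ degreeLT ℝ (nc + 1) := by
  set c := cpoly (f i) with hc
  have key : glue19 * derivative c = dpoly (f (i + 1)) + epoly (f i) := by
    have h := cond_D hcond i
    rw [Dpol, ← hc] at h
    exact eq_add_of_sub_eq h
  have hcoeff : ∀ k, nE < k → (glue19 * derivative c).coeff k = 0 := by
    intro k hk
    rw [key, Polynomial.coeff_add, dpoly_coeff_zero_of h1S' (hf (i + 1)) hk,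
      coeff_eq_zero_of_mem_degreeLT (epoly_mem_of h1S (hf i)) (by omega), add_zero]
  by_cases hder : derivative c = 0
  · have h0 := natDegree_eq_zero_of_derivative_eq_zero hder
    exact mem_degreeLT_of_natDegree_le (by omega)
  · have hmulnd : (glue19 * derivative c).natDegree ≤ nE :=
      natDegree_le_iff_coeff_eq_zero.mpr hcoeff
    rw [Polynomial.natDegree_mul glue19_ne_zero hder, natDegree_glue19] at hmulnd
    by_cases hc0 : c.natDegree = 0
    · exact mem_degreeLT_of_natDegree_le (by omega)
    · have hlead : (derivative c).coeff (c.natDegree - 1) ≠ 0 := by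
        rw [Polynomial.coeff_derivative, show c.natDegree - 1 + 1 = c.natDegree by omega]
        refine mul_ne_zero ?_ ?_
        · exact Polynomial.leadingCoeff_ne_zero.mpr fun h => hc0 (by rw [h]; simp)
        · positivity
      have hge := Polynomial.le_natDegree_of_ne_zero hlead
      exact mem_degreeLT_of_natDegree_le (by omega)

end degdrop

end
end Aux19

namespace Aux19
open MvPolynomial Polynomial TrivSqZeroExt DualNumber
noncomputable section

@[simp] lemma z3_21 : (2 + 1 : ZMod 3) = 0 := by decide
@[simp] lemma z3_01 : (0 - 1 : ZMod 3) = 2 := by decide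
@[simp] lemma z3_11 : (1 - 1 : ZMod 3) = 0 := by decide
@[simp] lemma z3_21' : (2 - 1 : ZMod 3) = 1 := by decide

lemma zmod3_cases (i : ZMod 3) : i = 0 ∨ i = 1 ∨ i = 2 := by revert i; decide

/-- the parameter space: interior parts, `c`-jets, `E`-jets -/
abbrev Wm (nc nE : ℕ) (Sint : Finset (Fin 2 →₀ ℕ)) : Type :=
  (ZMod 3 → ↥(restrictSupport ℝ (↑Sint : Set (Fin 2 →₀ ℕ)))) ×
    ((ZMod 3 → ↥(degreeLT ℝ (nc + 1))) × (ZMod 3 → ↥(degreeLT ℝ (nE + 1))))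

/-- the target of the constraint map -/
abbrev Tm : Type := (ℝ × ℝ × ℝ) × ((ZMod 3 → ℝ) × (ZMod 3 → ℝ))

section core
variable {nc nE : ℕ} {Sint : Finset (Fin 2 →₀ ℕ)}

/-- the 9 vertex-compatibility constraints -/
def lam (nc nE : ℕ) (Sint : Finset (Fin 2 →₀ ℕ)) : Wm nc nE Sint →ₗ[ℝ] Tm where
  toFun w :=
    (((w.2.1 0 : PR).coeff 0 - (w.2.1 1 : PR).coeff 0,
      (w.2.1 1 : PR).coeff 0 - (w.2.1 2 : PR).coeff 0,
      (w.2.1 0 : PR).coeff 1 + (w.2.1 1 : PR).coeff 1 + (w.2.1 2 : PR).coeff 1),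
     (fun i => (w.2.2 i : PR).coeff 0 - (w.2.1 (i - 1) : PR).coeff 1,
      fun i => (w.2.2 i : PR).coeff 1 + (w.2.2 (i - 1) : PR).coeff 1
        - (glue19 * derivative (w.2.1 (i - 1) : PR)).coeff 1))
  map_add' w w' := by
    show _ = (_, _) + (_, _)
    rw [Prod.mk_add_mk, Prod.mk.injEq]
    constructor
    · show _ = (_, _, _) + (_, _, _)
      rw [Prod.mk_add_mk, Prod.mk_add_mk, Prod.mk.injEq, Prod.mk.injEq]
      refine ⟨?_, ?_, ?_⟩ <;>
        · simp only [Prod.fst_add, Prod.snd_add, Pi.add_apply, Submodule.coe_add,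
            Polynomial.coeff_add]
          ring
    · rw [Prod.mk_add_mk, Prod.mk.injEq]
      constructor <;> funext i <;>
        · simp only [Prod.fst_add, Prod.snd_add, Pi.add_apply, Submodule.coe_add,
            Polynomial.coeff_add, Polynomial.derivative_add, mul_add]
          ring
  map_smul' r w := by
    show _ = r • (_, _)
    rw [Prod.smul_mk, Prod.mk.injEq]
    constructor
    · show _ = r • (_, _, _)
      rw [Prod.smul_mk, Prod.smul_mk, Prod.mk.injEq, Prod.mk.injEq]
      refine ⟨?_, ?_, ?_⟩ <;>
        · simp only [Prod.smul_fst, Prod.smul_snd, Pi.smul_apply, SetLike.val_smul,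
            Polynomial.coeff_smul, smul_eq_mul]
          ring
    · rw [Prod.smul_mk, Prod.mk.injEq]
      constructor <;> funext i <;>
        · simp only [Prod.smul_fst, Prod.smul_snd, Pi.smul_apply, SetLike.val_smul,
            Polynomial.coeff_smul, Polynomial.derivative_smul, smul_eq_mul, mul_smul_comm]
          ring

/-- the solution map from parameters to splines -/
def SolL (nc nE : ℕ) (Sint : Finset (Fin 2 →₀ ℕ)) : Wm nc nE Sint →ₗ[ℝ] (ZMod 3 → M2) where
  toFun w := fun i =>
    ↑(w.1 i) + Jrec ↑(w.2.1 (i - 1)) ↑(w.2.1 i) ↑(w.2.2 (i - 1)) ↑(w.2.2 i)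
  map_add' w w' := by
    funext i
    simp only [Prod.fst_add, Prod.snd_add, Pi.add_apply, Submodule.coe_add]
    rw [Jrec_add]
    ring
  map_smul' r w := by
    funext i
    simp only [Prod.smul_fst, Prod.smul_snd, Pi.smul_apply, SetLike.val_smul,
      RingHom.id_apply]
    rw [Jrec_smul]
    rw [MvPolynomial.smul_eq_C_mul, MvPolynomial.smul_eq_C_mul, MvPolynomial.smul_eq_C_mul]
    ring

section lamZero
variable {w : Wm nc nE Sint} (hw : lam nc nE Sint w = 0)
include hw

lemma lemC : ∀ i, (w.2.2 i : PR).coeff 0 = (w.2.1 (i - 1) : PR).coeff 1 := by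
  intro i
  have h := congrFun (congrArg (fun t => t.2.1) hw) i
  simp only [lam, LinearMap.coe_mk, AddHom.coe_mk] at h
  have h0 : (0 : Tm).2.1 i = 0 := rfl
  rw [h0] at h
  linarith [h]

lemma lemDraw : ∀ i, (w.2.2 i : PR).coeff 1 + (w.2.2 (i - 1) : PR).coeff 1
    - (glue19 * derivative (w.2.1 (i - 1) : PR)).coeff 1 = 0 := by
  intro i
  have h := congrFun (congrArg (fun t => t.2.2) hw) i
  simp only [lam, LinearMap.coe_mk, AddHom.coe_mk] at h
  have h0 : (0 : Tm).2.2 i = 0 := rfl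
  rw [h0] at h
  linarith [h]

lemma lemA1 : (w.2.1 0 : PR).coeff 0 - (w.2.1 1 : PR).coeff 0 = 0 := by
  have h := congrArg (fun t => t.1.1) hw
  simpa only [lam, LinearMap.coe_mk, AddHom.coe_mk, Prod.fst_zero, Prod.snd_zero] using h

lemma lemA2 : (w.2.1 1 : PR).coeff 0 - (w.2.1 2 : PR).coeff 0 = 0 := by
  have h := congrArg (fun t => t.1.2.1) hw
  simpa only [lam, LinearMap.coe_mk, AddHom.coe_mk, Prod.fst_zero, Prod.snd_zero] using h

lemma lemBsum : (w.2.1 0 : PR).coeff 1 + (w.2.1 1 : PR).coeff 1 + (w.2.1 2 : PR).coeff 1 = 0 := by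
  have h := congrArg (fun t => t.1.2.2) hw
  simpa only [lam, LinearMap.coe_mk, AddHom.coe_mk, Prod.fst_zero, Prod.snd_zero] using h

lemma lemA : ∀ i, (w.2.1 (i + 1) : PR).coeff 0 = (w.2.1 i : PR).coeff 0 := by
  intro i
  have h1 := lemA1 hw
  have h2 := lemA2 hw
  rcases zmod3_cases i with rfl | rfl | rfl
  · show ((w.2.1 1 : PR)).coeff 0 = _
    linarith
  · show ((w.2.1 2 : PR)).coeff 0 = _
    linarith
  · rw [z3_21]
    linarith

lemma lemB : ∀ i, (Dpol (w.2.1 i : PR) (w.2.2 i : PR)).coeff 0 = (w.2.1 (i + 1) : PR).coeff 1 := by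
  intro i
  rw [Dpol_coeff0, lemC hw i]
  have hs := lemBsum hw
  rcases zmod3_cases i with rfl | rfl | rfl
  · rw [z3_01]
    show _ = ((w.2.1 1 : PR)).coeff 1
    linarith
  · rw [z3_11]
    show _ = ((w.2.1 2 : PR)).coeff 1
    linarith
  · rw [z3_21', z3_21]
    linarith

lemma lemD : ∀ i, (Dpol (w.2.1 i : PR) (w.2.2 i : PR)).coeff 1 = (w.2.2 (i + 1) : PR).coeff 1 := by
  intro i
  have h := lemDraw hw (i + 1)
  rw [add_sub_cancel_right] at h
  rw [Dpol, Polynomial.coeff_sub, gder_coeff1] at *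
  linarith

end lamZero

end core
end
end Aux19

namespace Aux19
open MvPolynomial Polynomial TrivSqZeroExt DualNumber
noncomputable section

lemma cpoly_add (a b : M2) : cpoly (a + b) = cpoly a + cpoly b := by
  rw [cpoly, cpoly, cpoly, map_add, fst_add]

lemma epoly_add (a b : M2) : epoly (a + b) = epoly a + epoly b := by
  rw [epoly, epoly, epoly, map_add, snd_add]

lemma cpoly_smul (r : ℝ) (a : M2) : cpoly (r • a) = r • cpoly a := by
  rw [cpoly, cpoly, map_smul, fst_smul]

lemma epoly_smul (r : ℝ) (a : M2) : epoly (r • a) = r • epoly a := by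
  rw [epoly, epoly, map_smul, snd_smul]

/-- the interior part of a face polynomial -/
def extH (f : ZMod 3 → M2) (i : ZMod 3) : M2 :=
  f i - Jrec (cpoly (f (i - 1))) (cpoly (f i)) (epoly (f (i - 1))) (epoly (f i))

lemma extH_add (f g : ZMod 3 → M2) (i : ZMod 3) :
    extH (f + g) i = extH f i + extH g i := by
  simp only [extH, Pi.add_apply, cpoly_add, epoly_add, Jrec_add]
  ring

lemma extH_smul (r : ℝ) (f : ZMod 3 → M2) (i : ZMod 3) :
    extH (r • f) i = r • extH f i := by
  simp only [extH, Pi.smul_apply, cpoly_smul, epoly_smul, Jrec_smul, smul_sub]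

section withS
variable {S : Set (Fin 2 →₀ ℕ)} {nc nE : ℕ} {Sint : Finset (Fin 2 →₀ ℕ)}

section solside
variable (hnc : 1 ≤ nc) (hE : nc + 1 = nE)
  (h0S : ∀ k ≤ nc, fs2 0 k ∈ S) (h0S' : ∀ j ≤ nc, fs2 j 0 ∈ S)
  (h1S : ∀ k, fs2 1 k ∈ S ↔ k ≤ nE) (h1S' : ∀ j, fs2 j 1 ∈ S ↔ j ≤ nE)
  (hSint : ∀ m, m ∈ Sint ↔ m ∈ S ∧ 2 ≤ m 0 ∧ 2 ≤ m 1)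

include hSint in
lemma hint0 : ∀ m ∈ (↑Sint : Set (Fin 2 →₀ ℕ)), 2 ≤ m 0 := by
  intro m hm
  exact (((hSint m).mp (Finset.mem_coe.mp hm)).2).1

include hSint in
lemma hint1 : ∀ m ∈ (↑Sint : Set (Fin 2 →₀ ℕ)), 2 ≤ m 1 := by
  intro m hm
  exact (((hSint m).mp (Finset.mem_coe.mp hm)).2).2

include hSint in
lemma hSsub : (↑Sint : Set (Fin 2 →₀ ℕ)) ⊆ S := fun m hm =>
  ((hSint m).mp (Finset.mem_coe.mp hm)).1

include hSint in
lemma Nmap_sol {w : Wm nc nE Sint} (hw : lam nc nE Sint w = 0) (i : ZMod 3) :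
    Nmap (SolL nc nE Sint w i) = (inl (w.2.1 i : PR) : DA) + (inr (w.2.2 i : PR) : DA) := by
  show Nmap (↑(w.1 i) + Jrec ↑(w.2.1 (i - 1)) ↑(w.2.1 i) ↑(w.2.2 (i - 1)) ↑(w.2.2 i)) = _
  rw [map_add, Nmap_eq_zero_of_interior _ (w.1 i).2 (hint0 hSint), zero_add,
    Nmap_Jrec _ _ _ _ (lemC hw i)]

include hSint in
lemma Rmap_sol {w : Wm nc nE Sint} (hw : lam nc nE Sint w = 0) (i : ZMod 3) :
    Rmap (SolL nc nE Sint w (i + 1)) =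
      (inl (w.2.1 i : PR) : DA) + (inr (Dpol (w.2.1 i : PR) (w.2.2 i : PR)) : DA) := by
  show Rmap (↑(w.1 (i + 1)) + Jrec ↑(w.2.1 (i + 1 - 1)) ↑(w.2.1 (i + 1)) ↑(w.2.2 (i + 1 - 1))
    ↑(w.2.2 (i + 1))) = _
  rw [add_sub_cancel_right, map_add, Rmap_eq_zero_of_interior _ (w.1 (i + 1)).2 (hint1 hSint),
    zero_add, Rmap_Jrec _ _ _ _ (lemA hw i) (lemB hw i) (lemD hw i)]

include hnc hE h0S h0S' h1S h1S' hSint in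
lemma sol_mem_GG {w : Wm nc nE Sint} (hw : lam nc nE Sint w = 0) :
    SolL nc nE Sint w ∈ GG S := by
  rw [mem_GG_iff]
  constructor
  · intro i
    rw [show SolL nc nE Sint w i = ↑(w.1 i) + Jrec ↑(w.2.1 (i - 1)) ↑(w.2.1 i) ↑(w.2.2 (i - 1))
      ↑(w.2.2 i) from rfl]
    refine Submodule.add_mem _ (restrictSupport_mono (R := ℝ) (hSsub hSint) (w.1 i).2) ?_
    exact Jrec_mem S nc nE hnc hE h0S h0S' (fun k hk => (h1S k).mpr hk)
      (fun j hj => (h1S' j).mpr hj) _ _ _ _ (w.2.1 (i - 1)).2 (w.2.1 i).2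
      (w.2.2 (i - 1)).2 (w.2.2 i).2
  · intro i
    have hN := Nmap_sol hSint hw i
    have hc : cpoly (SolL nc nE Sint w i) = ↑(w.2.1 i) := by
      rw [cpoly, hN]; simp
    have he : epoly (SolL nc nE Sint w i) = ↑(w.2.2 i) := by
      rw [epoly, hN]; simp
    rw [Lmap_decomp, hc, he, Rmap_sol hSint hw i]

end solside

section extside
variable (hnc : 1 ≤ nc) (hE : nc + 1 = nE)
  (h0S : ∀ k ≤ nc, fs2 0 k ∈ S) (h0S' : ∀ j ≤ nc, fs2 j 0 ∈ S)
  (h1S : ∀ k, fs2 1 k ∈ S ↔ k ≤ nE) (h1S' : ∀ j, fs2 j 1 ∈ S ↔ j ≤ nE)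
  (hSint : ∀ m, m ∈ Sint ↔ m ∈ S ∧ 2 ≤ m 0 ∧ 2 ≤ m 1)
  {f : ZMod 3 → M2} (hf : ∀ i, f i ∈ restrictSupport ℝ S)
  (hcond : ∀ i, Lmap (f i) = Rmap (f (i + 1)))

include hcond in
lemma hCf (i : ZMod 3) : (epoly (f i)).coeff 0 = (cpoly (f (i - 1))).coeff 1 := by
  have h := cond_c hcond (i - 1)
  rw [sub_add_cancel] at h
  rw [eb_coeff, ← h]

include hcond in
lemma hAf (i : ZMod 3) : (cpoly (f i)).coeff 0 = (cpoly (f (i - 1))).coeff 0 := by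
  have h := cond_c hcond (i - 1)
  rw [sub_add_cancel] at h
  rw [cb_coeff0, h]

include hcond in
lemma hBf (i : ZMod 3) :
    (Dpol (cpoly (f (i - 1))) (epoly (f (i - 1)))).coeff 0 = (cpoly (f i)).coeff 1 := by
  have h := cond_D hcond (i - 1)
  rw [sub_add_cancel] at h
  rw [h, ← cd_coeff]

include hcond in
lemma hDf (i : ZMod 3) :
    (Dpol (cpoly (f (i - 1))) (epoly (f (i - 1)))).coeff 1 = (epoly (f i)).coeff 1 := by
  have h := cond_D hcond (i - 1)
  rw [sub_add_cancel] at h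
  rw [h, ← ed_coeff]

include hcond in
lemma Nmap_extH (i : ZMod 3) : Nmap (extH f i) = 0 := by
  rw [extH, map_sub, Nmap_decomp (f i), Nmap_Jrec _ _ _ _ (hCf hcond i), sub_self]

include hcond in
lemma Rmap_extH (i : ZMod 3) : Rmap (extH f i) = 0 := by
  have h1 := cond_c hcond (i - 1)
  rw [sub_add_cancel] at h1
  have h2 := cond_D hcond (i - 1)
  rw [sub_add_cancel] at h2
  rw [extH, map_sub, Rmap_decomp (f i),
    Rmap_Jrec _ _ _ _ (hAf hcond i) (hBf hcond i) (hDf hcond i), h2, h1, sub_self]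

include hnc hE h0S h0S' h1S h1S' hSint hf hcond in
lemma extH_mem (i : ZMod 3) : extH f i ∈ restrictSupport ℝ (↑Sint : Set (Fin 2 →₀ ℕ)) := by
  rw [mem_restrictSupport_iff]
  intro m hm
  have hJmem : Jrec (cpoly (f (i - 1))) (cpoly (f i)) (epoly (f (i - 1))) (epoly (f i))
      ∈ restrictSupport ℝ S :=
    Jrec_mem S nc nE hnc hE h0S h0S' (fun k hk => (h1S k).mpr hk) (fun j hj => (h1S' j).mpr hj)
      _ _ _ _ (cpoly_mem_of hnc hE h1S h1S' hf hcond (i - 1))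
      (cpoly_mem_of hnc hE h1S h1S' hf hcond i)
      (epoly_mem_of h1S (hf (i - 1))) (epoly_mem_of h1S (hf i))
  by_cases hmS : m ∈ S
  · have hm' : ¬(2 ≤ m 0 ∧ 2 ≤ m 1) := fun hc => hm (Finset.mem_coe.mpr
      ((hSint m).mpr ⟨hmS, hc.1, hc.2⟩))
    have hsmall : m 0 ≤ 1 ∨ m 1 ≤ 1 := by omega
    rcases hsmall with hs | hs
    · have ha : m 0 = 0 ∨ m 0 = 1 := by omega
      rcases ha with ha | ha
      · rw [eq_fs2 m, ha, ← coeff_cpoly]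
        rw [show cpoly (extH f i) = fst (Nmap (extH f i)) from rfl, Nmap_extH hcond i]
        simp
      · rw [eq_fs2 m, ha, ← coeff_epoly]
        rw [show epoly (extH f i) = snd (Nmap (extH f i)) from rfl, Nmap_extH hcond i]
        simp
    · have ha : m 1 = 0 ∨ m 1 = 1 := by omega
      rcases ha with ha | ha
      · rw [eq_fs2 m, ha, ← coeff_bpoly]
        rw [show bpoly (extH f i) = fst (Rmap (extH f i)) from rfl, Rmap_extH hcond i]
        simp
      · rw [eq_fs2 m, ha, ← coeff_dpoly]
        rw [show dpoly (extH f i) = snd (Rmap (extH f i)) from rfl, Rmap_extH hcond i]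
        simp
  · have hz1 : MvPolynomial.coeff m (f i) = 0 := (mem_restrictSupport_iff _ _).mp (hf i) m hmS
    have hz2 := (mem_restrictSupport_iff _ _).mp hJmem m hmS
    rw [extH, MvPolynomial.coeff_sub, hz1, hz2, sub_zero]

end extside

end withS
end
end Aux19

namespace Aux19
open MvPolynomial Polynomial TrivSqZeroExt DualNumber
noncomputable section

section withS2
variable {S : Set (Fin 2 →₀ ℕ)} {nc nE : ℕ} {Sint : Finset (Fin 2 →₀ ℕ)}

/-- the extraction map from splines to parameters -/
def fromGG (hnc : 1 ≤ nc) (hE : nc + 1 = nE)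
    (h0S : ∀ k ≤ nc, fs2 0 k ∈ S) (h0S' : ∀ j ≤ nc, fs2 j 0 ∈ S)
    (h1S : ∀ k, fs2 1 k ∈ S ↔ k ≤ nE) (h1S' : ∀ j, fs2 j 1 ∈ S ↔ j ≤ nE)
    (hSint : ∀ m, m ∈ Sint ↔ m ∈ S ∧ 2 ≤ m 0 ∧ 2 ≤ m 1) :
    ↥(GG S) →ₗ[ℝ] Wm nc nE Sint where
  toFun x :=
    (fun i => ⟨extH (x : ZMod 3 → M2) i,
      extH_mem hnc hE h0S h0S' h1S h1S' hSint ((mem_GG_iff S x.1).mp x.2).1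
        ((mem_GG_iff S x.1).mp x.2).2 i⟩,
     fun i => ⟨cpoly ((x : ZMod 3 → M2) i),
      cpoly_mem_of hnc hE h1S h1S' ((mem_GG_iff S x.1).mp x.2).1
        ((mem_GG_iff S x.1).mp x.2).2 i⟩,
     fun i => ⟨epoly ((x : ZMod 3 → M2) i),
      epoly_mem_of h1S (((mem_GG_iff S x.1).mp x.2).1 i)⟩)
  map_add' x y := by
    refine Prod.ext (funext fun i => Subtype.ext ?_) (Prod.ext (funext fun i => Subtype.ext ?_)
      (funext fun i => Subtype.ext ?_))
    · show extH (↑(x + y)) i = extH (↑x) i + extH (↑y) i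
      rw [Submodule.coe_add, extH_add]
    · show cpoly ((↑(x + y) : ZMod 3 → M2) i) = cpoly ((↑x : ZMod 3 → M2) i) +
        cpoly ((↑y : ZMod 3 → M2) i)
      rw [Submodule.coe_add, Pi.add_apply, cpoly_add]
    · show epoly ((↑(x + y) : ZMod 3 → M2) i) = epoly ((↑x : ZMod 3 → M2) i) +
        epoly ((↑y : ZMod 3 → M2) i)
      rw [Submodule.coe_add, Pi.add_apply, epoly_add]
  map_smul' r x := by
    refine Prod.ext (funext fun i => Subtype.ext ?_) (Prod.ext (funext fun i => Subtype.ext ?_)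
      (funext fun i => Subtype.ext ?_))
    · show extH (↑(r • x)) i = r • extH (↑x) i
      rw [Submodule.coe_smul, extH_smul]
    · show cpoly ((↑(r • x) : ZMod 3 → M2) i) = r • cpoly ((↑x : ZMod 3 → M2) i)
      rw [Submodule.coe_smul, Pi.smul_apply, cpoly_smul]
    · show epoly ((↑(r • x) : ZMod 3 → M2) i) = r • epoly ((↑x : ZMod 3 → M2) i)
      rw [Submodule.coe_smul, Pi.smul_apply, epoly_smul]

variable (hnc : 1 ≤ nc) (hE : nc + 1 = nE)
  (h0S : ∀ k ≤ nc, fs2 0 k ∈ S) (h0S' : ∀ j ≤ nc, fs2 j 0 ∈ S)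
  (h1S : ∀ k, fs2 1 k ∈ S ↔ k ≤ nE) (h1S' : ∀ j, fs2 j 1 ∈ S ↔ j ≤ nE)
  (hSint : ∀ m, m ∈ Sint ↔ m ∈ S ∧ 2 ≤ m 0 ∧ 2 ≤ m 1)

include hnc hE h0S h0S' h1S h1S' hSint in
lemma lam_fromGG (x : ↥(GG S)) :
    lam nc nE Sint (fromGG hnc hE h0S h0S' h1S h1S' hSint x) = 0 := by
  have hcond := ((mem_GG_iff S x.1).mp x.2).2
  set f : ZMod 3 → M2 := (x : ZMod 3 → M2) with hfdef
  have hA := hAf hcond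
  have hB := hBf hcond
  have hC := hCf hcond
  have hD := hDf hcond
  refine Prod.ext (Prod.ext ?_ (Prod.ext ?_ ?_)) (Prod.ext (funext fun i => ?_)
    (funext fun i => ?_))
  · show (cpoly (f 0)).coeff 0 - (cpoly (f 1)).coeff 0 = 0
    have := hA 1
    rw [z3_11] at this
    linarith
  · show (cpoly (f 1)).coeff 0 - (cpoly (f 2)).coeff 0 = 0
    have := hA 2
    rw [z3_21'] at this
    linarith
  · show (cpoly (f 0)).coeff 1 + (cpoly (f 1)).coeff 1 + (cpoly (f 2)).coeff 1 = 0
    have hb := hB 1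
    rw [z3_11, Dpol_coeff0] at hb
    have hcc := hC 0
    rw [z3_01] at hcc
    linarith
  · show (epoly (f i)).coeff 0 - (cpoly (f (i - 1))).coeff 1 = 0
    have := hC i
    linarith
  · show (epoly (f i)).coeff 1 + (epoly (f (i - 1))).coeff 1
      - (glue19 * derivative (cpoly (f (i - 1)))).coeff 1 = 0
    have := hD i
    rw [Dpol, Polynomial.coeff_sub] at this
    linarith

set_option synthInstance.maxHeartbeats 1000000 in
/-- the main equivalence between the parameter kernel and the spline space -/
def splineEquiv : ↥(LinearMap.ker (lam nc nE Sint)) ≃ₗ[ℝ] ↥(GG S) :=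
  LinearEquiv.ofLinear
    (LinearMap.codRestrict (GG S)
      ((SolL nc nE Sint).comp (LinearMap.ker (lam nc nE Sint)).subtype)
      (fun q => sol_mem_GG hnc hE h0S h0S' h1S h1S' hSint (LinearMap.mem_ker.mp q.2)))
    (LinearMap.codRestrict (LinearMap.ker (lam nc nE Sint))
      (fromGG hnc hE h0S h0S' h1S h1S' hSint)
      (fun x => LinearMap.mem_ker.mpr (lam_fromGG hnc hE h0S h0S' h1S h1S' hSint x)))
    (by
      apply LinearMap.ext
      intro x
      apply Subtype.ext
      funext i
      show extH (↑x) i + Jrec (cpoly ((x : ZMod 3 → M2) (i - 1))) (cpoly ((x : ZMod 3 → M2) i))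
        (epoly ((x : ZMod 3 → M2) (i - 1))) (epoly ((x : ZMod 3 → M2) i)) = (x : ZMod 3 → M2) i
      rw [extH, sub_add_cancel])
    (by
      apply LinearMap.ext
      intro q
      have hq : lam nc nE Sint (q : Wm nc nE Sint) = 0 := LinearMap.mem_ker.mp q.2
      set w : Wm nc nE Sint := (q : Wm nc nE Sint) with hwdef
      have hc : ∀ j, cpoly (SolL nc nE Sint w j) = ↑(w.2.1 j) := fun j => by
        rw [cpoly, Nmap_sol hSint hq j]; simp
      have he : ∀ j, epoly (SolL nc nE Sint w j) = ↑(w.2.2 j) := fun j => by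
        rw [epoly, Nmap_sol hSint hq j]; simp
      apply Subtype.ext
      refine Prod.ext (funext fun i => Subtype.ext ?_) (Prod.ext (funext fun i => Subtype.ext ?_)
        (funext fun i => Subtype.ext ?_))
      · show extH (SolL nc nE Sint w) i = ↑(w.1 i)
        rw [extH, hc, hc, he, he]
        show (↑(w.1 i) : M2) + Jrec ↑(w.2.1 (i - 1)) ↑(w.2.1 i) ↑(w.2.2 (i - 1)) ↑(w.2.2 i)
          - Jrec ↑(w.2.1 (i - 1)) ↑(w.2.1 i) ↑(w.2.2 (i - 1)) ↑(w.2.2 i) = ↑(w.1 i)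
        rw [add_sub_cancel_right]
      · exact hc i
      · exact he i)

include hnc hE in
lemma lam_surj : Function.Surjective (lam nc nE Sint) := by
  have hnE1 : 1 ≤ nE := by omega
  intro t
  obtain ⟨⟨t1, t2, t3⟩, gam, del⟩ := t
  set e0 : ℝ := (del 0 + del 1 + 2*t3 - del 2)/2 with he0
  set e1 : ℝ := (del 1 + 2*t3 - del 0 + del 2)/2 with he1
  set e2 : ℝ := (del 0 - del 1 - 2*t3 + del 2)/2 with he2
  have lin_mem : ∀ (a b : ℝ) (n : ℕ), 1 ≤ n →
      Polynomial.C a + Polynomial.C b * Polynomial.X ∈ degreeLT ℝ (n + 1) := by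
    intro a b n hn
    refine mem_degreeLT_of_coeff fun k hk => ?_
    rw [Polynomial.coeff_add, Polynomial.coeff_C, if_neg (by omega),
      Polynomial.coeff_C_mul, Polynomial.coeff_X, if_neg (by omega), mul_zero, add_zero]
  refine ⟨⟨fun _ => 0,
    fun i => if i = 0 then ⟨Polynomial.C (t1 + t2) + Polynomial.C t3 * Polynomial.X,
        lin_mem _ _ _ hnc⟩
      else if i = 1 then ⟨Polynomial.C t2 + Polynomial.C 0 * Polynomial.X, lin_mem _ _ _ hnc⟩
      else ⟨0, Submodule.zero_mem _⟩,
    fun i => if i = 0 then ⟨Polynomial.C (gam 0) + Polynomial.C e0 * Polynomial.X,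
        lin_mem _ _ _ hnE1⟩
      else if i = 1 then ⟨Polynomial.C (gam 1 + t3) + Polynomial.C e1 * Polynomial.X,
        lin_mem _ _ _ hnE1⟩
      else ⟨Polynomial.C (gam 2) + Polynomial.C e2 * Polynomial.X, lin_mem _ _ _ hnE1⟩⟩, ?_⟩
  have hco0 : ∀ (a b : ℝ), (Polynomial.C a + Polynomial.C b * Polynomial.X).coeff 0 = a := by
    intro a b; simp
  have hco1 : ∀ (a b : ℝ), (Polynomial.C a + Polynomial.C b * Polynomial.X).coeff 1 = b := by
    intro a b; simp [Polynomial.coeff_C]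
  have hco2 : ∀ (a b : ℝ), (Polynomial.C a + Polynomial.C b * Polynomial.X).coeff 2 = 0 := by
    intro a b; simp [Polynomial.coeff_C]
  have f10 : (1 : ZMod 3) ≠ 0 := by decide
  have f20 : (2 : ZMod 3) ≠ 0 := by decide
  have f21 : (2 : ZMod 3) ≠ 1 := by decide
  refine Prod.ext (Prod.ext ?_ (Prod.ext ?_ ?_)) (Prod.ext (funext fun i => ?_)
    (funext fun i => ?_))
  · simp [lam, f10, hco0]
    try ring
  · simp [lam, f10, f20, f21, hco0]
  · simp [lam, f10, f20, f21, hco1]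
  · rcases zmod3_cases i with rfl | rfl | rfl <;>
      · simp [lam, f10, f20, f21, hco0, hco1, show (-1 : ZMod 3) = 2 from by decide]
        try ring
  · rcases zmod3_cases i with rfl | rfl | rfl <;>
      · simp [lam, f10, f20, f21, hco1, hco2, gder_coeff1, he0, he1, he2,
          show (-1 : ZMod 3) = 2 from by decide]
        try ring

set_option synthInstance.maxHeartbeats 1000000 in
set_option maxHeartbeats 1000000 in
include hnc hE h0S h0S' h1S h1S' hSint in
theorem core_finrank :
    Module.finrank ℝ ↥(GG S) + 9 = 3 * Sint.card + 3 * (nc + 1) + 3 * (nE + 1) := by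
  haveI : Fintype ↥(↑Sint : Set (Fin 2 →₀ ℕ)) := FinsetCoe.fintype Sint
  haveI hfin1 : Module.Finite ℝ ↥(restrictSupport ℝ (↑Sint : Set (Fin 2 →₀ ℕ))) :=
    Module.Finite.of_basis (basisRestrictSupport ℝ _)
  haveI hfin2 : Module.Finite ℝ ↥(degreeLT ℝ (nc + 1)) :=
    Module.Finite.equiv (degreeLTEquiv ℝ (nc + 1)).symm
  haveI hfin3 : Module.Finite ℝ ↥(degreeLT ℝ (nE + 1)) :=
    Module.Finite.equiv (degreeLTEquiv ℝ (nE + 1)).symm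
  have hGG : Module.finrank ℝ ↥(GG S) =
      Module.finrank ℝ ↥(LinearMap.ker (lam nc nE Sint)) :=
    (splineEquiv hnc hE h0S h0S' h1S h1S' hSint).symm.finrank_eq
  have hrn := LinearMap.finrank_range_add_finrank_ker (lam nc nE Sint)
  rw [LinearMap.range_eq_top.mpr (lam_surj hnc hE (Sint := Sint)), finrank_top] at hrn
  have hT : Module.finrank ℝ Tm = 9 := by
    rw [Module.finrank_prod, Module.finrank_prod, Module.finrank_prod, Module.finrank_prod,
      Module.finrank_self, Module.finrank_pi, ZMod.card]
  have ccard : Fintype.card ↥(↑Sint : Set (Fin 2 →₀ ℕ)) = Sint.card := by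
    rw [← Fintype.card_coe Sint]
    exact Fintype.card_congr (Equiv.subtypeEquivRight fun x => Finset.mem_coe)
  have c1 : Module.finrank ℝ ↥(restrictSupport ℝ (↑Sint : Set (Fin 2 →₀ ℕ))) = Sint.card := by
    rw [Module.finrank_eq_card_basis (basisRestrictSupport ℝ _), ccard]
  have c2 : Module.finrank ℝ ↥(degreeLT ℝ (nc + 1)) = nc + 1 := by
    rw [(degreeLTEquiv ℝ (nc + 1)).finrank_eq, Module.finrank_pi, Fintype.card_fin]
  have c3 : Module.finrank ℝ ↥(degreeLT ℝ (nE + 1)) = nE + 1 := by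
    rw [(degreeLTEquiv ℝ (nE + 1)).finrank_eq, Module.finrank_pi, Fintype.card_fin]
  have hW : Module.finrank ℝ (Wm nc nE Sint) =
      3 * Sint.card + (3 * (nc + 1) + 3 * (nE + 1)) := by
    rw [Module.finrank_prod, Module.finrank_prod, Module.finrank_pi_fintype,
      Module.finrank_pi_fintype, Module.finrank_pi_fintype]
    simp only [c1, c2, c3, Finset.sum_const, Finset.card_univ, smul_eq_mul,
      show Fintype.card (ZMod 3) = 3 from rfl]
  rw [hGG]
  omega


end withS2
end
end Aux19

namespace Aux19
open MvPolynomial Polynomial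
noncomputable section

/-- the triangle `{(x, y) : x + y ≤ n}` as a finset -/
def Tset (n : ℕ) : Finset (ℕ × ℕ) :=
  (Finset.range (n + 1) ×ˢ Finset.range (n + 1)).filter (fun p => p.1 + p.2 ≤ n)

lemma mem_Tset (n : ℕ) (p : ℕ × ℕ) : p ∈ Tset n ↔ p.1 + p.2 ≤ n := by
  rw [Tset, Finset.mem_filter, Finset.mem_product, Finset.mem_range, Finset.mem_range]
  omega

lemma tri_card (n : ℕ) : 2 * (Tset n).card = (n + 1) * (n + 2) := by
  have hfib := Finset.card_eq_sum_card_fiberwise (s := Tset n) (t := Finset.range (n + 1))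
    (f := fun p => p.1) (fun p hp => Finset.mem_range.mpr
      (show p.1 < n + 1 by rw [Finset.mem_coe, mem_Tset] at hp; omega))
  have hfibx : ∀ x ∈ Finset.range (n + 1),
      ((Tset n).filter fun p => p.1 = x).card = n + 1 - x := by
    intro x hx
    have : ((Tset n).filter fun p => p.1 = x) =
        (Finset.range (n + 1 - x)).map ⟨fun y => (x, y), fun a b h => by
          simpa using congrArg Prod.snd h⟩ := by
      ext ⟨a, b⟩
      rw [Finset.mem_filter, mem_Tset, Finset.mem_map]
      simp only [Function.Embedding.coeFn_mk, Finset.mem_range, Prod.mk.injEq]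
      constructor
      · rintro ⟨h1, rfl⟩
        exact ⟨b, by omega, rfl⟩
      · rintro ⟨y, hy, rfl, rfl⟩
        omega
    rw [this, Finset.card_map, Finset.card_range]
  rw [hfib, Finset.sum_congr rfl hfibx]
  have hrefl : ∑ x ∈ Finset.range (n + 1), (n + 1 - x) =
      ∑ x ∈ Finset.range (n + 1), (x + 1) := by
    rw [← Finset.sum_range_reflect (fun j => j + 1) (n + 1)]
    refine Finset.sum_congr rfl fun x hx => ?_
    rw [Finset.mem_range] at hx
    omega
  rw [hrefl, Finset.sum_add_distrib, Finset.sum_const, Finset.card_range, smul_eq_mul, mul_one]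
  have hg := Finset.sum_range_id_mul_two (n + 1)
  rw [Nat.add_sub_cancel] at hg
  zify at hg ⊢
  linear_combination hg

/-- the (+2,+2)-shifted embedding into exponent vectors -/
def embT : ℕ × ℕ ↪ (Fin 2 →₀ ℕ) where
  toFun p := fs2 (p.1 + 2) (p.2 + 2)
  inj' := by
    intro a b h
    have := fs2_inj.mp h
    ext
    · omega
    · omega

/-- the unshifted embedding -/
def embB : ℕ × ℕ ↪ (Fin 2 →₀ ℕ) where
  toFun p := fs2 p.1 p.2
  inj' := by
    intro a b h
    have := fs2_inj.mp h
    exact Prod.ext this.1 this.2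

lemma sum_eq_apply (m : Fin 2 →₀ ℕ) : (m.sum fun _ e => e) = m 0 + m 1 := by
  conv_lhs => rw [eq_fs2 m]
  rw [fs2_sum]

theorem finrankTot (e : ℕ) :
    Module.finrank ℝ ↥(G19Tot (e + 4)) + 9 =
      3 * (Tset e).card + 3 * (e + 3) + 3 * (e + 4) := by
  have h := core_finrank (S := {n : Fin 2 →₀ ℕ | (n.sum fun _ e => e) ≤ e + 4})
    (nc := e + 2) (nE := e + 3) (Sint := (Tset e).map embT)
    (by omega) (by omega)
    (fun k hk => by rw [Set.mem_setOf_eq, fs2_sum]; omega)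
    (fun j hj => by rw [Set.mem_setOf_eq, fs2_sum]; omega)
    (fun k => by rw [Set.mem_setOf_eq, fs2_sum]; omega)
    (fun j => by rw [Set.mem_setOf_eq, fs2_sum]; omega)
    (fun m => by
      rw [Finset.mem_map]
      constructor
      · rintro ⟨p, hp, rfl⟩
        rw [mem_Tset] at hp
        refine ⟨?_, ?_, ?_⟩
        · show (embT p).sum (fun _ e => e) ≤ e + 4
          show (fs2 (p.1 + 2) (p.2 + 2)).sum (fun _ e => e) ≤ e + 4
          rw [fs2_sum]; omega
        · show 2 ≤ fs2 (p.1 + 2) (p.2 + 2) 0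
          rw [fs2_apply0]; omega
        · show 2 ≤ fs2 (p.1 + 2) (p.2 + 2) 1
          rw [fs2_apply1]; omega
      · rintro ⟨hS, h0, h1⟩
        rw [Set.mem_setOf_eq, sum_eq_apply] at hS
        refine ⟨(m 0 - 2, m 1 - 2), ?_, ?_⟩
        · rw [mem_Tset]; omega
        · show fs2 (m 0 - 2 + 2) (m 1 - 2 + 2) = m
          rw [show m 0 - 2 + 2 = m 0 by omega, show m 1 - 2 + 2 = m 1 by omega]
          exact (eq_fs2 m).symm)
  rw [Finset.card_map] at h
  have h2 : Module.finrank ℝ ↥(G19Tot (e + 4)) + 9 =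
      3 * (Tset e).card + 3 * (e + 2 + 1) + 3 * (e + 3 + 1) := h
  omega

theorem finrankBi (e : ℕ) :
    Module.finrank ℝ ↥(G19Bi (e + 3)) + 9 =
      3 * ((e + 2) * (e + 2)) + 3 * (e + 3) + 3 * (e + 4) := by
  have h := core_finrank (S := {n : Fin 2 →₀ ℕ | ∀ i, n i ≤ e + 3})
    (nc := e + 2) (nE := e + 3)
    (Sint := (Finset.Icc 2 (e + 3) ×ˢ Finset.Icc 2 (e + 3)).map embB)
    (by omega) (by omega)
    (fun k hk => by
      rw [Set.mem_setOf_eq]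
      intro i
      fin_cases i <;> simp <;> omega)
    (fun j hj => by
      rw [Set.mem_setOf_eq]
      intro i
      fin_cases i <;> simp <;> omega)
    (fun k => by
      rw [Set.mem_setOf_eq]
      constructor
      · intro h
        have := h 1
        rw [fs2_apply1] at this
        omega
      · intro hk i
        fin_cases i <;> simp <;> omega)
    (fun j => by
      rw [Set.mem_setOf_eq]
      constructor
      · intro h
        have := h 0
        rw [fs2_apply0] at this
        omega
      · intro hj i
        fin_cases i <;> simp <;> omega)
    (fun m => by
      rw [Finset.mem_map]
      constructor
      · rintro ⟨p, hp, rfl⟩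
        rw [Finset.mem_product, Finset.mem_Icc, Finset.mem_Icc] at hp
        refine ⟨?_, ?_, ?_⟩
        · show ∀ i, fs2 p.1 p.2 i ≤ e + 3
          intro i
          fin_cases i <;> simp <;> omega
        · show 2 ≤ fs2 p.1 p.2 0
          rw [fs2_apply0]; omega
        · show 2 ≤ fs2 p.1 p.2 1
          rw [fs2_apply1]; omega
      · rintro ⟨hS, h0, h1⟩
        rw [Set.mem_setOf_eq] at hS
        have hS0 := hS 0
        have hS1 := hS 1
        refine ⟨(m 0, m 1), ?_, (eq_fs2 m).symm⟩
        rw [Finset.mem_product, Finset.mem_Icc, Finset.mem_Icc]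
        exact ⟨⟨h0, hS0⟩, ⟨h1, hS1⟩⟩)
  rw [Finset.card_map, Finset.card_product, Nat.card_Icc] at h
  rw [show e + 3 + 1 - 2 = e + 2 by omega] at h
  have h2 : Module.finrank ℝ ↥(G19Bi (e + 3)) + 9 =
      3 * ((e + 2) * (e + 2)) + 3 * (e + 2 + 1) + 3 * (e + 3 + 1) := h
  omega

end
end Aux19

/-- Star of a vertex `γ` of valence 3 with three quadrilateral faces
whose other edge-vertices have valence 4, symmetric gluing data (`d_a = 2`, `a ≠ 0`):
`dim G¹_d(Δ_γ, Φ) = (3/2)(d² − d − 2)` for every `d ≥ 4`, and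
`dim G¹_{(d,d)}(Δ_γ, Φ) = 3d² − 3` for every `d ≥ 3`. -/
theorem stmt19 :
    (∀ d : ℕ, 4 ≤ d →
      (Module.finrank ℝ ↥(G19Tot d) : ℚ) = (3 / 2) * ((d : ℚ) ^ 2 - d - 2)) ∧
    (∀ d : ℕ, 3 ≤ d →
      Module.finrank ℝ ↥(G19Bi d) = 3 * d ^ 2 - 3) := by
  constructor
  · intro d hd
    obtain ⟨e, rfl⟩ : ∃ e, d = e + 4 := ⟨d - 4, by omega⟩
    have h1 := Aux19.finrankTot e
    have h2 := Aux19.tri_card e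
    have h1q : (Module.finrank ℝ ↥(G19Tot (e + 4)) : ℚ) + 9 =
        3 * ((Aux19.Tset e).card : ℚ) + 3 * (e + 3) + 3 * (e + 4) := by
      exact_mod_cast congrArg (Nat.cast : ℕ → ℚ) h1
    have h2q : 2 * ((Aux19.Tset e).card : ℚ) = (e + 1) * (e + 2) := by
      exact_mod_cast congrArg (Nat.cast : ℕ → ℚ) h2
    push_cast
    linear_combination h1q + (3 / 2) * h2q
  · intro d hd
    obtain ⟨e, rfl⟩ : ∃ e, d = e + 3 := ⟨d - 3, by omega⟩
    have h1 := Aux19.finrankBi e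
    have key : Module.finrank ℝ ↥(G19Bi (e + 3)) + 3 = 3 * (e + 3) ^ 2 := by
      zify at h1 ⊢
      linear_combination h1
    omega
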